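/- arXiv:1509.01762 — 7 statements merged into one kernel-verified Lean document; each statement's English description precedes it below -/
import Mathlib

section
/- Let r > 1 and C₂ ≥ 0. Suppose u : [0,∞) → ℝ is positive and continuous, and satisfies u(t) ≤ C₂(1+t)^{-r} + ∫₀ᵗ C₁(1+t-s)^{-r} u(s) ds for all t ≥ 0, where C₁ ≥ 0 is small enough that C₁ ∫₀ᵗ (1+t-s)^{-r}(1+s)^{-r} ds ≤ θ(1+t)^{-r} holds for some θ < 1 and all t > 0. Then u(t) ≤ (C₂/(1-θ))(1+t)^{-r} for all t ≥ 0. -/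
/-!
Let `M` be the maximum of `u / w` on `[0, T]`, attained at `t₀`, where `w t = (1 + t) ^ (-r)`.
Bounding `u ≤ M w` under the integral at `t₀` and using the smallness of the kernel against `w`
gives `M ≤ C₂ + θ M`, hence `M ≤ C₂ / (1 - θ)`, and `u T ≤ M w T`.
-/

open MeasureTheory Set

theorem exists_mem_Icc_forall_le_div_mul {u w : ℝ → ℝ} {a b : ℝ} (hab : a ≤ b)
    (hu : ContinuousOn u (Icc a b)) (hw : ContinuousOn w (Icc a b))
    (hw_pos : ∀ x ∈ Icc a b, 0 < w x) :
    ∃ x₀ ∈ Icc a b, ∀ x ∈ Icc a b, u x ≤ u x₀ / w x₀ * w x := by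
  obtain ⟨x₀, hx₀, hmax⟩ := isCompact_Icc.exists_isMaxOn (nonempty_Icc.mpr hab)
    (hu.div hw fun x hx => (hw_pos x hx).ne')
  refine ⟨x₀, hx₀, fun x hx => ?_⟩
  rw [← div_le_iff₀ (hw_pos x hx)]
  exact hmax hx

theorem intervalIntegral.integral_mul_le_mul_integral_mul {k u w : ℝ → ℝ} {a b M : ℝ}
    (hab : a ≤ b) (hk : ∀ s ∈ Icc a b, 0 ≤ k s) (hk_cont : ContinuousOn k (Icc a b))
    (hu_cont : ContinuousOn u (Icc a b)) (hw_cont : ContinuousOn w (Icc a b))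
    (hle : ∀ s ∈ Icc a b, u s ≤ M * w s) :
    ∫ s in a..b, k s * u s ≤ M * ∫ s in a..b, k s * w s := by
  rw [← intervalIntegral.integral_const_mul]
  refine intervalIntegral.integral_mono_on hab ((hk_cont.mul hu_cont).intervalIntegrable_of_Icc hab)
    ((continuousOn_const.mul (hk_cont.mul hw_cont)).intervalIntegrable_of_Icc hab) fun s hs => ?_
  calc k s * u s ≤ k s * (M * w s) := mul_le_mul_of_nonneg_left (hle s hs) (hk s hs)
    _ = M * (k s * w s) := by ring

theorem le_div_one_sub_mul_of_le_add_integral {u w : ℝ → ℝ} {k : ℝ → ℝ → ℝ} {C θ : ℝ}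
    (hθ : θ < 1) (hu : ∀ t, 0 ≤ t → 0 ≤ u t) (hu_cont : ContinuousOn u (Ici 0))
    (hw : ∀ t, 0 ≤ t → 0 < w t) (hw_cont : ContinuousOn w (Ici 0))
    (hk : ∀ t s, 0 ≤ s → s ≤ t → 0 ≤ k t s) (hk_cont : ∀ t, 0 < t → ContinuousOn (k t) (Icc 0 t))
    (hineq : ∀ t, 0 ≤ t → u t ≤ C * w t + ∫ s in (0 : ℝ)..t, k t s * u s)
    (hsmall : ∀ t, 0 < t → ∫ s in (0 : ℝ)..t, k t s * w s ≤ θ * w t) :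
    ∀ t, 0 ≤ t → u t ≤ C / (1 - θ) * w t := by
  -- needed when the maximum sits at `t₀ = 0`, where `hsmall` says nothing
  have hθ₀ : 0 ≤ θ := by
    have hint : 0 ≤ ∫ s in (0 : ℝ)..1, k 1 s * w s :=
      intervalIntegral.integral_nonneg zero_le_one fun s hs =>
        mul_nonneg (hk 1 s hs.1 hs.2) (hw s hs.1).le
    exact nonneg_of_mul_nonneg_left (hint.trans (hsmall 1 one_pos)) (hw 1 zero_le_one)
  intro T hT
  obtain ⟨t₀, ⟨ht₀, ht₀T⟩, hmax⟩ := exists_mem_Icc_forall_le_div_mul hT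
    (hu_cont.mono Icc_subset_Ici_self) (hw_cont.mono Icc_subset_Ici_self) fun x hx => hw x hx.1
  set M := u t₀ / w t₀
  have hwt₀ := hw t₀ ht₀
  have hM : 0 ≤ M := div_nonneg (hu t₀ ht₀) hwt₀.le
  have hintegral : ∫ s in (0 : ℝ)..t₀, k t₀ s * u s ≤ θ * M * w t₀ := by
    rcases ht₀.eq_or_lt with rfl | ht₀_pos
    · rw [intervalIntegral.integral_same]
      positivity
    calc ∫ s in (0 : ℝ)..t₀, k t₀ s * u s ≤ M * ∫ s in (0 : ℝ)..t₀, k t₀ s * w s :=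
          intervalIntegral.integral_mul_le_mul_integral_mul ht₀ (fun s hs => hk t₀ s hs.1 hs.2)
            (hk_cont t₀ ht₀_pos) (hu_cont.mono Icc_subset_Ici_self)
            (hw_cont.mono Icc_subset_Ici_self) fun s hs => hmax s ⟨hs.1, hs.2.trans ht₀T⟩
      _ ≤ M * (θ * w t₀) := mul_le_mul_of_nonneg_left (hsmall t₀ ht₀_pos) hM
      _ = θ * M * w t₀ := by ring
  have hM_le : M ≤ C + θ * M := by
    rw [div_le_iff₀ hwt₀]
    linarith [hineq t₀ ht₀]
  calc u T ≤ M * w T := hmax T ⟨hT, le_rfl⟩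
    _ ≤ C / (1 - θ) * w T := by
      gcongr
      · exact (hw T hT).le
      · rw [le_div_iff₀ (sub_pos.mpr hθ)]
        linarith

theorem gronwall_power_law_general (r C₁ C₂ θ : ℝ) (hC₁ : 0 ≤ C₁)
    (hθ : θ < 1) (u : ℝ → ℝ)
    (hu_pos : ∀ t, 0 ≤ t → 0 < u t)
    (hu_cont : ContinuousOn u (Set.Ici (0 : ℝ)))
    (hineq : ∀ t, 0 ≤ t →
      u t ≤ C₂ * (1 + t) ^ (-r) + ∫ s in (0 : ℝ)..t, C₁ * (1 + t - s) ^ (-r) * u s)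
    (hsmall : ∀ t, 0 < t →
      C₁ * ∫ s in (0 : ℝ)..t, (1 + t - s) ^ (-r) * (1 + s) ^ (-r) ≤ θ * (1 + t) ^ (-r)) :
    ∀ t, 0 ≤ t → u t ≤ (C₂ / (1 - θ)) * (1 + t) ^ (-r) := by
  refine le_div_one_sub_mul_of_le_add_integral (w := fun t => (1 + t) ^ (-r))
    (k := fun t s => C₁ * (1 + t - s) ^ (-r)) hθ (fun t ht => (hu_pos t ht).le) hu_cont
    (fun t ht => by positivity)
    (ContinuousOn.rpow_const (by fun_prop) fun t ht => Or.inl (by linarith [mem_Ici.mp ht]))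
    (fun t s _ hst => mul_nonneg hC₁ (Real.rpow_nonneg (by linarith) _))
    (fun t _ => continuousOn_const.mul
      (ContinuousOn.rpow_const (by fun_prop) fun s hs => Or.inl (by linarith [hs.2])))
    hineq fun t ht => ?_
  simpa only [mul_assoc, intervalIntegral.integral_const_mul] using hsmall t ht

/-- Gronwall-type inequality for power-law kernels. -/
theorem gronwall_power_law (r C₁ C₂ θ : ℝ) (hr : 1 < r) (hC₁ : 0 ≤ C₁) (hC₂ : 0 ≤ C₂)
    (hθ : θ < 1) (u : ℝ → ℝ)
    (hu_pos : ∀ t, 0 ≤ t → 0 < u t)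
    (hu_cont : ContinuousOn u (Set.Ici (0 : ℝ)))
    (hineq : ∀ t, 0 ≤ t →
      u t ≤ C₂ * (1 + t) ^ (-r) + ∫ s in (0 : ℝ)..t, C₁ * (1 + t - s) ^ (-r) * u s)
    (hsmall : ∀ t, 0 < t →
      C₁ * ∫ s in (0 : ℝ)..t, (1 + t - s) ^ (-r) * (1 + s) ^ (-r) ≤ θ * (1 + t) ^ (-r)) :
    ∀ t, 0 ≤ t → u t ≤ (C₂ / (1 - θ)) * (1 + t) ^ (-r) :=
  gronwall_power_law_general r C₁ C₂ θ hC₁ hθ u hu_pos hu_cont hineq hsmall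
end

section
/- For every r > 1 and every t ≥ 0, ∫₀ᵗ (1+s)^{-r}(1+t-s)^{-r} ds ≤ (2^{r+1}/(r-1)) (1+t)^{-r}. -/
open MeasureTheory

/-! On `[0, t]` one of `1 + s` and `1 + t - s` is at least `(1 + t) / 2`, so the product of the
two kernels is at most `2 ^ r (1 + t) ^ (-r)` times their sum. By symmetry the sum integrates to
twice `∫₀ᵗ (1 + s) ^ (-r) ds ≤ 1 / (r - 1)`. -/

namespace Real

theorem rpow_neg_mul_rpow_neg_le {a b c r : ℝ} (ha : 0 < a) (hb : 0 < b) (hc : 0 < c)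
    (hcab : c ≤ a + b) (hr : 0 ≤ r) :
    a ^ (-r) * b ^ (-r) ≤ 2 ^ r * c ^ (-r) * (a ^ (-r) + b ^ (-r)) := by
  have half_pow : (c / 2) ^ (-r) = 2 ^ r * c ^ (-r) := by
    rw [div_rpow hc.le zero_le_two, rpow_neg zero_le_two, div_inv_eq_mul, mul_comm]
  have larger_le {x : ℝ} (hx : c / 2 ≤ x) : x ^ (-r) ≤ 2 ^ r * c ^ (-r) :=
    half_pow ▸ rpow_le_rpow_of_nonpos (by positivity) hx (neg_nonpos.mpr hr)
  have hA : 0 ≤ a ^ (-r) := rpow_nonneg ha.le _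
  have hB : 0 ≤ b ^ (-r) := rpow_nonneg hb.le _
  rcases le_total a b with hab | hab
  · calc a ^ (-r) * b ^ (-r) ≤ a ^ (-r) * (2 ^ r * c ^ (-r)) := by
          gcongr; exact larger_le (by linarith)
      _ ≤ 2 ^ r * c ^ (-r) * (a ^ (-r) + b ^ (-r)) := by
          rw [mul_comm]; gcongr; exact le_add_of_nonneg_right hB
  · calc a ^ (-r) * b ^ (-r) ≤ 2 ^ r * c ^ (-r) * b ^ (-r) := by
          gcongr; exact larger_le (by linarith)
      _ ≤ 2 ^ r * c ^ (-r) * (a ^ (-r) + b ^ (-r)) := by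
          gcongr; exact le_add_of_nonneg_left hA

end Real

theorem integral_one_add_rpow_neg_le {r t : ℝ} (hr : 1 < r) (ht : 0 ≤ t) :
    ∫ s in (0 : ℝ)..t, (1 + s) ^ (-r) ≤ 1 / (r - 1) := by
  have hshift : ∫ s in (0 : ℝ)..t, (1 + s) ^ (-r) = ∫ x in (1 : ℝ)..(1 + t), x ^ (-r) := by
    simpa using intervalIntegral.integral_comp_add_left (fun x : ℝ => x ^ (-r)) 1 (a := 0) (b := t)
  have hzero : (0 : ℝ) ∉ Set.uIcc 1 (1 + t) := by
    rw [Set.uIcc_of_le (by linarith)]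
    exact fun h => by linarith [h.1]
  have hflip : ((1 + t) ^ (-r + 1) - 1) / (-r + 1) = (1 - (1 + t) ^ (-r + 1)) / (r - 1) := by
    rw [← neg_div_neg_eq]; ring_nf
  rw [hshift, integral_rpow (Or.inr ⟨by linarith, hzero⟩), Real.one_rpow, hflip]
  gcongr
  exact sub_le_self _ (Real.rpow_nonneg (by linarith) _)

/-- Convolution estimate for the power-law kernel `s ↦ (1+s)^{-r}`. -/
theorem convolution_power_law_bound (r : ℝ) (hr : 1 < r) (t : ℝ) (ht : 0 ≤ t) :
    (∫ s in (0 : ℝ)..t, (1 + s) ^ (-r) * (1 + t - s) ^ (-r)) ≤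
      (2 ^ (r + 1) / (r - 1)) * (1 + t) ^ (-r) := by
  have hIcc : Set.uIcc 0 t = Set.Icc 0 t := Set.uIcc_of_le ht
  have hf_cont : ContinuousOn (fun s : ℝ => (1 + s) ^ (-r)) (Set.uIcc 0 t) := by
    refine ContinuousOn.rpow_const (by fun_prop) fun s hs => Or.inl ?_
    rw [hIcc] at hs
    exact (by linarith [hs.1] : (0 : ℝ) < 1 + s).ne'
  have hg_cont : ContinuousOn (fun s : ℝ => (1 + t - s) ^ (-r)) (Set.uIcc 0 t) := by
    refine ContinuousOn.rpow_const (by fun_prop) fun s hs => Or.inl ?_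
    rw [hIcc] at hs
    exact (by linarith [hs.2] : (0 : ℝ) < 1 + t - s).ne'
  have hf := hf_cont.intervalIntegrable (μ := volume)
  have hg := hg_cont.intervalIntegrable (μ := volume)
  have hreflect : ∫ s in (0 : ℝ)..t, (1 + t - s) ^ (-r) = ∫ s in (0 : ℝ)..t, (1 + s) ^ (-r) := by
    simpa [add_sub_assoc] using
      intervalIntegral.integral_comp_sub_left (fun x : ℝ => (1 + x) ^ (-r)) t (a := 0) (b := t)
  calc (∫ s in (0 : ℝ)..t, (1 + s) ^ (-r) * (1 + t - s) ^ (-r))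
      ≤ ∫ s in (0 : ℝ)..t, 2 ^ r * (1 + t) ^ (-r) * ((1 + s) ^ (-r) + (1 + t - s) ^ (-r)) := by
        exact intervalIntegral.integral_mono_on ht (hf.mul_continuousOn hg_cont)
          ((hf.add hg).const_mul _) fun s hs =>
            Real.rpow_neg_mul_rpow_neg_le (by linarith [hs.1]) (by linarith [hs.2])
            (by linarith) (by linarith) (by linarith)
    _ = 2 ^ r * (1 + t) ^ (-r) * (2 * ∫ s in (0 : ℝ)..t, (1 + s) ^ (-r)) := by
        rw [intervalIntegral.integral_const_mul, intervalIntegral.integral_add hf hg, hreflect,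
          two_mul]
    _ ≤ 2 ^ r * (1 + t) ^ (-r) * (2 * (1 / (r - 1))) := by
        gcongr; exact integral_one_add_rpow_neg_le hr ht
    _ = 2 ^ (r + 1) / (r - 1) * (1 + t) ^ (-r) := by
        rw [Real.rpow_add_one two_ne_zero]; ring
end

section
/- Fix η ∈ (0,1) and r > 0. Define h_r : ℝ → ℝ by h_r(s) = e^{-s} for s ≥ 0 and h_r(s) = (1-s)^{r-1} for s ≤ 0. Then there exist constants C₋, C₊ > 0, independent of i, such that for every integer i ≥ 1, C₋(1+i)^{1+r} ≤ ∫_ℝ min(i, e^{s+ηi}) h_r(s) ds ≤ C₊(1+i)^{1+r}. -/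
/-
Write `a = ηi`. On `(-a, ∞)` the truncated exponential is at most `i`, and `h_r` has mass
`1 + ((1 + a)^r - 1)/r ≍ (1 + a)^r` there. On `(-∞, -a]` the factor `e^{s+a}` decays
exponentially while `h_r(s) ≤ (1 + a)^q (1 - s - a)^q` with `q = max (r - 1) 0` grows only
polynomially, so this part is `O((1 + a)^q)`. Conversely, on `(-a/2, ∞)` the truncated
exponential is at least `min(i, e^{a/2}) ≥ ηi/2`, and `h_r` has mass
`≍ (1 + a/2)^r ≥ (η/2)^r (1 + i)^r` there.
-/

open MeasureTheory

/-- The kernel `h_r`. -/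
noncomputable def hker (r : ℝ) (s : ℝ) : ℝ :=
  if 0 ≤ s then Real.exp (-s) else (1 - s) ^ (r - 1)

open Set Real

theorem one_add_rpow_le_mul_exp {q ε t : ℝ} (hq : 0 ≤ q) (hε : 0 < ε) (ht : 0 ≤ t) :
    (1 + t) ^ q ≤ (q / ε + 1) ^ q * exp (ε * t) := by
  set c := (q / ε + 1)⁻¹
  have hK : 1 ≤ q / ε + 1 := le_add_of_nonneg_left (by positivity)
  have hc : 0 < c := by positivity
  have hcq : c * q ≤ ε := by
    rw [inv_mul_le_iff₀ (by positivity), add_mul, div_mul_cancel₀ _ hε.ne']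
    linarith
  calc (1 + t) ^ q ≤ ((q / ε + 1) * (1 + c * t)) ^ q := by
        gcongr
        rw [mul_add, ← mul_assoc, mul_inv_cancel₀ (by positivity), one_mul]
        linarith
    _ ≤ (q / ε + 1) ^ q * exp (c * t) ^ q := by
        rw [mul_rpow (by positivity) (by positivity)]
        gcongr
        linarith [add_one_le_exp (c * t)]
    _ ≤ (q / ε + 1) ^ q * exp (ε * t) := by
        rw [← exp_mul]
        exact mul_le_mul_of_nonneg_left (exp_le_exp.mpr (by nlinarith)) (by positivity)

theorem integrableOn_exp_mul_add_Iic {b : ℝ} (hb : 0 < b) (a : ℝ) :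
    IntegrableOn (fun s => exp (b * (s + a))) (Iic (-a)) := by
  simp_rw [mul_add, exp_add]
  exact (integrableOn_exp_mul_Iic hb _).mul_const _

theorem integral_exp_mul_add_Iic {b : ℝ} (hb : 0 < b) (a : ℝ) :
    ∫ s in Iic (-a), exp (b * (s + a)) = b⁻¹ := by
  simp_rw [mul_add, exp_add, integral_mul_const, integral_exp_mul_Iic hb, div_mul_eq_mul_div,
    ← exp_add]
  simp

section

variable {r : ℝ}

theorem hker_of_nonneg {s : ℝ} (hs : 0 ≤ s) : hker r s = exp (-s) := if_pos hs

theorem hker_of_nonpos {s : ℝ} (hs : s ≤ 0) : hker r s = (1 - s) ^ (r - 1) := by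
  rcases hs.lt_or_eq with hs | rfl
  · exact if_neg hs.not_ge
  · simp [hker]

theorem hker_nonneg (s : ℝ) : 0 ≤ hker r s := by
  unfold hker
  split_ifs with hs
  · positivity
  · exact rpow_nonneg (by linarith) _

theorem continuous_hker (r : ℝ) : Continuous (hker r) := by
  refine continuous_if_le continuous_const continuous_id (by fun_prop) ?_ ?_
  · exact ContinuousOn.rpow_const (by fun_prop) fun s hs => Or.inl (by simp at hs; linarith)
  · rintro s rfl
    simp

theorem integrableOn_hker_Ioi (c : ℝ) : IntegrableOn (hker r) (Ioi c) := by
  have hIoi : IntegrableOn (hker r) (Ioi 0) :=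
    (integrableOn_exp_neg_Ioi 0).congr_fun (fun s hs => (hker_of_nonneg (le_of_lt hs)).symm)
      measurableSet_Ioi
  refine (((continuous_hker r).integrableOn_Icc (a := c) (b := 0)).union hIoi).mono_set
    fun s hs => (le_or_gt s 0).imp (fun h => ⟨le_of_lt hs, h⟩) id

theorem integral_hker_Ioc (hr : r ≠ 0) {c : ℝ} (hc : c ≤ 0) :
    ∫ s in Ioc c 0, hker r s = ((1 - c) ^ r - 1) / r := by
  rw [setIntegral_congr_fun measurableSet_Ioc fun s hs => hker_of_nonpos hs.2,
    ← intervalIntegral.integral_of_le hc,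
    intervalIntegral.integral_comp_sub_left (fun s => s ^ (r - 1)),
    integral_rpow (Or.inr ⟨by contrapose! hr; linarith, by
      rw [uIcc_of_le (by linarith)]; exact fun h => absurd h.1 (by norm_num)⟩)]
  simp

theorem integral_hker_Ioi (hr : r ≠ 0) {a : ℝ} (ha : 0 ≤ a) :
    ∫ s in Ioi (-a), hker r s = 1 + ((1 + a) ^ r - 1) / r := by
  have hc : -a ≤ 0 := by linarith
  rw [← Ioc_union_Ioi_eq_Ioi hc, setIntegral_union (Ioc_disjoint_Ioi le_rfl) measurableSet_Ioi
    ((integrableOn_hker_Ioi (-a)).mono_set Ioc_subset_Ioi_self) (integrableOn_hker_Ioi 0),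
    integral_hker_Ioc hr hc, setIntegral_congr_fun measurableSet_Ioi
      fun s hs => hker_of_nonneg (le_of_lt hs), integral_exp_neg_Ioi_zero, sub_neg_eq_add]
  ring

theorem exp_add_mul_hker_le {a s : ℝ} (ha : 0 ≤ a) (hs : s ≤ -a) :
    exp (s + a) * hker r s ≤
      (2 * max (r - 1) 0 + 1) ^ max (r - 1) 0 * (1 + a) ^ max (r - 1) 0 *
        exp (2⁻¹ * (s + a)) := by
  set q := max (r - 1) 0
  have hq : 0 ≤ q := le_max_right _ _
  have hgrowth :=
    one_add_rpow_le_mul_exp hq (by norm_num : (0 : ℝ) < 2⁻¹) (by linarith : 0 ≤ -a - s)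
  rw [show q / 2⁻¹ + 1 = 2 * q + 1 by ring] at hgrowth
  have hker_le : hker r s ≤ (1 + a) ^ q * (1 + (-a - s)) ^ q := by
    rw [hker_of_nonpos (by linarith), ← mul_rpow (by linarith) (by linarith)]
    calc (1 - s) ^ (r - 1) ≤ (1 - s) ^ q :=
          rpow_le_rpow_of_exponent_le (by linarith) (le_max_left _ _)
      _ ≤ _ := rpow_le_rpow (by linarith) (by nlinarith) hq
  have hexp : exp (s + a) * exp (2⁻¹ * (-a - s)) = exp (2⁻¹ * (s + a)) := by
    rw [← exp_add]; ring_nf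
  calc exp (s + a) * hker r s
      ≤ exp (s + a) * ((1 + a) ^ q * ((2 * q + 1) ^ q * exp (2⁻¹ * (-a - s)))) := by
        gcongr
        exact hker_le.trans (mul_le_mul_of_nonneg_left hgrowth (by positivity))
    _ = _ := by rw [← hexp]; ring

theorem min_exp_mul_hker_nonneg {x : ℝ} (hx : 0 ≤ x) (a s : ℝ) :
    0 ≤ min x (exp (s + a)) * hker r s :=
  mul_nonneg (le_min hx (exp_pos _).le) (hker_nonneg s)

theorem integrable_min_exp_mul_hker {x a : ℝ} (hx : 0 ≤ x) (ha : 0 ≤ a) :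
    Integrable (fun s => min x (exp (s + a)) * hker r s) := by
  have hmeas : AEStronglyMeasurable (fun s => min x (exp (s + a)) * hker r s) :=
    (by have := continuous_hker r; fun_prop : Continuous _).aestronglyMeasurable
  rw [← integrableOn_univ, ← Iic_union_Ioi (a := -a)]
  refine IntegrableOn.union ?_ ?_
  · refine Integrable.mono'
      ((integrableOn_exp_mul_add_Iic (b := 2⁻¹) (by norm_num) a).const_mul
        ((2 * max (r - 1) 0 + 1) ^ max (r - 1) 0 * (1 + a) ^ max (r - 1) 0)) hmeas.restrict ?_
    filter_upwards [ae_restrict_mem measurableSet_Iic] with s hs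
    rw [norm_of_nonneg (min_exp_mul_hker_nonneg hx a s)]
    exact (mul_le_mul_of_nonneg_right (min_le_right _ _) (hker_nonneg s)).trans
      (exp_add_mul_hker_le ha hs)
  · refine Integrable.mono' ((integrableOn_hker_Ioi (r := r) (-a)).const_mul x) hmeas.restrict ?_
    filter_upwards with s
    rw [norm_of_nonneg (min_exp_mul_hker_nonneg hx a s)]
    exact mul_le_mul_of_nonneg_right (min_le_left _ _) (hker_nonneg s)

theorem integral_min_exp_mul_hker_le (hr : r ≠ 0) {x a : ℝ} (hx : 0 ≤ x) (ha : 0 ≤ a) :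
    ∫ s, min x (exp (s + a)) * hker r s ≤
      2 * (2 * max (r - 1) 0 + 1) ^ max (r - 1) 0 * (1 + a) ^ max (r - 1) 0 +
        x * (1 + ((1 + a) ^ r - 1) / r) := by
  set K := (2 * max (r - 1) 0 + 1) ^ max (r - 1) 0 * (1 + a) ^ max (r - 1) 0
  have hint := integrable_min_exp_mul_hker (r := r) hx ha
  rw [← intervalIntegral.integral_Iic_add_Ioi (b := -a) hint.integrableOn hint.integrableOn]
  gcongr ?_ + ?_
  · calc ∫ s in Iic (-a), min x (exp (s + a)) * hker r s
        ≤ ∫ s in Iic (-a), K * exp (2⁻¹ * (s + a)) :=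
          setIntegral_mono_on hint.integrableOn
            ((integrableOn_exp_mul_add_Iic (by norm_num) a).const_mul K) measurableSet_Iic
            fun s hs => (mul_le_mul_of_nonneg_right (min_le_right _ _) (hker_nonneg s)).trans
              (exp_add_mul_hker_le ha hs)
      _ = 2 * (2 * max (r - 1) 0 + 1) ^ max (r - 1) 0 * (1 + a) ^ max (r - 1) 0 := by
          rw [integral_const_mul, integral_exp_mul_add_Iic (by norm_num)]; ring
  · calc ∫ s in Ioi (-a), min x (exp (s + a)) * hker r s
        ≤ ∫ s in Ioi (-a), x * hker r s :=
          setIntegral_mono_on hint.integrableOn ((integrableOn_hker_Ioi (-a)).const_mul x)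
            measurableSet_Ioi
            fun s _ => mul_le_mul_of_nonneg_right (min_le_left _ _) (hker_nonneg s)
      _ = x * (1 + ((1 + a) ^ r - 1) / r) := by rw [integral_const_mul, integral_hker_Ioi hr ha]

theorem le_integral_min_exp_mul_hker (hr : r ≠ 0) {x a t : ℝ} (hx : 0 ≤ x) (ha : 0 ≤ a)
    (ht : 0 ≤ t) :
    min x (exp (a - t)) * (1 + ((1 + t) ^ r - 1) / r) ≤
      ∫ s, min x (exp (s + a)) * hker r s := by
  have hint := integrable_min_exp_mul_hker (r := r) hx ha
  calc min x (exp (a - t)) * (1 + ((1 + t) ^ r - 1) / r)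
      = ∫ s in Ioi (-t), min x (exp (a - t)) * hker r s := by
        rw [integral_const_mul, integral_hker_Ioi hr ht]
    _ ≤ ∫ s in Ioi (-t), min x (exp (s + a)) * hker r s :=
        setIntegral_mono_on ((integrableOn_hker_Ioi (-t)).const_mul _) hint.integrableOn
          measurableSet_Ioi fun s hs => by
            gcongr
            · exact hker_nonneg s
            · linarith [hs.out]
    _ ≤ ∫ s, min x (exp (s + a)) * hker r s :=
        setIntegral_le_integral hint (Filter.Eventually.of_forall (min_exp_mul_hker_nonneg hx a))

theorem div_max_le_one_add_sub_one_div (hr : 0 < r) {Y : ℝ} (hY : 1 ≤ Y) :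
    Y / max 1 r ≤ 1 + (Y - 1) / r := by
  rcases le_total r 1 with h | h
  · rw [max_eq_left h, div_one, ← sub_le_iff_le_add', le_div_iff₀ hr]
    nlinarith
  · rw [max_eq_right h, div_le_iff₀ hr, add_mul, div_mul_cancel₀ _ hr.ne']
    linarith

theorem one_add_sub_one_div_le (hr : 0 < r) {Y : ℝ} (hY : 1 ≤ Y) :
    1 + (Y - 1) / r ≤ (1 + r⁻¹) * Y := by
  rw [add_mul, one_mul, ← div_eq_inv_mul]
  gcongr
  linarith

theorem mul_one_add_rpow_le_integral_min_exp_mul_hker (hr : 0 < r) {η x : ℝ} (hη0 : 0 < η)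
    (hη1 : η ≤ 1) (hx : 1 ≤ x) :
    η / 2 * (η / 2) ^ r / (2 * max 1 r) * (1 + x) ^ (1 + r) ≤
      ∫ s, min x (exp (s + η * x)) * hker r s := by
  have hmin : η / 2 * ((1 + x) / 2) ≤ min x (exp (η * x - η * x / 2)) := by
    rw [show η * x - η * x / 2 = η * x / 2 by ring]
    refine le_min (by nlinarith) ?_
    nlinarith [add_one_le_exp (η * x / 2)]
  have hmass : (η / 2) ^ r * (1 + x) ^ r / max 1 r ≤ 1 + ((1 + η * x / 2) ^ r - 1) / r := by
    refine le_trans ?_ (div_max_le_one_add_sub_one_div hr (one_le_rpow (by nlinarith) hr.le))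
    rw [← mul_rpow (by positivity) (by positivity)]
    gcongr
    nlinarith
  calc η / 2 * (η / 2) ^ r / (2 * max 1 r) * (1 + x) ^ (1 + r)
      = η / 2 * ((1 + x) / 2) * ((η / 2) ^ r * (1 + x) ^ r / max 1 r) := by
        rw [rpow_one_add' (by positivity) (by positivity)]
        ring
    _ ≤ min x (exp (η * x - η * x / 2)) * (1 + ((1 + η * x / 2) ^ r - 1) / r) :=
        mul_le_mul hmin hmass (by positivity) (le_min (by linarith) (exp_pos _).le)
    _ ≤ ∫ s, min x (exp (s + η * x)) * hker r s :=
        le_integral_min_exp_mul_hker hr.ne' (by linarith) (by positivity) (by positivity)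

theorem integral_min_exp_mul_hker_le_mul_one_add_rpow (hr : 0 < r) {x a : ℝ} (ha : 0 ≤ a)
    (hax : a ≤ x) :
    ∫ s, min x (exp (s + a)) * hker r s ≤
      (2 * (2 * max (r - 1) 0 + 1) ^ max (r - 1) 0 + 1 + r⁻¹) * (1 + x) ^ (1 + r) := by
  have hx : 0 ≤ x := ha.trans hax
  have hpow : (1 + a) ^ max (r - 1) 0 ≤ (1 + x) ^ (1 + r) :=
    (rpow_le_rpow (by linarith) (by linarith) (le_max_right _ _)).trans
      (rpow_le_rpow_of_exponent_le (by linarith) (max_le (by linarith) (by linarith)))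
  have hmass : x * (1 + ((1 + a) ^ r - 1) / r) ≤ (1 + r⁻¹) * (1 + x) ^ (1 + r) := by
    rw [rpow_one_add' (by linarith) (by linarith), mul_left_comm]
    have h1 : 1 ≤ (1 + a) ^ r := one_le_rpow (by linarith) hr.le
    refine mul_le_mul (by linarith) ((one_add_sub_one_div_le hr h1).trans (by gcongr))
      ?_ (by linarith)
    have := div_nonneg (sub_nonneg.2 h1) hr.le
    linarith
  calc ∫ s, min x (exp (s + a)) * hker r s
      ≤ 2 * (2 * max (r - 1) 0 + 1) ^ max (r - 1) 0 * (1 + a) ^ max (r - 1) 0 +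
          x * (1 + ((1 + a) ^ r - 1) / r) := integral_min_exp_mul_hker_le hr.ne' hx ha
    _ ≤ 2 * (2 * max (r - 1) 0 + 1) ^ max (r - 1) 0 * (1 + x) ^ (1 + r) +
          (1 + r⁻¹) * (1 + x) ^ (1 + r) := by gcongr
    _ = _ := by ring

end

/-- Two-sided bound: integrating `min(i, e^{s+ηi})` against `h_r` reproduces `(1+i)^{1+r}`. -/
theorem hker_integral_two_sided (η r : ℝ) (hη : η ∈ Set.Ioo (0 : ℝ) 1) (hr : 0 < r) :
    ∃ Cm Cp : ℝ, 0 < Cm ∧ 0 < Cp ∧ ∀ i : ℕ, 1 ≤ i →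
      Cm * (1 + (i : ℝ)) ^ (1 + r) ≤
          (∫ s : ℝ, min (i : ℝ) (Real.exp (s + η * i)) * hker r s) ∧
      (∫ s : ℝ, min (i : ℝ) (Real.exp (s + η * i)) * hker r s) ≤
          Cp * (1 + (i : ℝ)) ^ (1 + r) := by
  obtain ⟨hη0, hη1⟩ := hη
  refine ⟨η / 2 * (η / 2) ^ r / (2 * max 1 r),
    2 * (2 * max (r - 1) 0 + 1) ^ max (r - 1) 0 + 1 + r⁻¹, by positivity, by positivity,
    fun i hi => ?_⟩
  have hx : (1 : ℝ) ≤ i := by exact_mod_cast hi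
  exact ⟨mul_one_add_rpow_le_integral_min_exp_mul_hker hr hη0 hη1.le hx,
    integral_min_exp_mul_hker_le_mul_one_add_rpow hr (by positivity) (by nlinarith)⟩
end

section
/- Let (a_i), (b_i), (Q_i) be positive sequences with Q_i Q_1 a_i = Q_{i+1} b_{i+1} for all i, and suppose b_i ≥ Q_1 a_i for all i ≥ N_z. Fix Ñ ≥ N_z + 1, and define A in weak form: ∑ Q_i (Ah)_i φ_i = ∑_{i≥Ñ} Q_i Q_1 a_i (h_i - h_{i+1})(φ_{i+1} - φ_i - φ_1) - Q_{Ñ-1}Q_1 a_{Ñ-1} h_Ñ (φ_Ñ - φ_{Ñ-1} - φ_1). Then for sequences h of finite support with ∑ Q_i i h_i = 0, taking φ_i = i·sgn(h_i), one has ⟨sgn h, Ah⟩_{X₁*,X₁} ≤ 0; hence A is dissipative on X₁ = ℓ¹(Q_i i). -/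
/-!
With `s = sgn h₁`, `g_i = |h_i| - h_i s ≥ 0` and `c_i = Q_i Q_1 a_i`, each flux term
`c_i (h_i - h_{i+1})(φ_{i+1} - φ_i - φ_1)` is at most `c_i (g_i - g_{i+1})`, because
`x sgn y ≤ |x| = x sgn x`. Summing by parts leaves
`c_{Ñ-1} g_Ñ - c_{n-1} g_n + ∑ (c_i - c_{i-1}) g_i`, and detailed balance turns
`c_i - c_{i-1}` into `Q_i (Q_1 a_i - b_i) ≤ 0` beyond `N_z`. So every partial sum is at most
`c_{Ñ-1} g_Ñ`, which the boundary term dominates.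
-/

open Finset

namespace Real

lemma mul_sign_self (x : ℝ) : x * sign x = |x| := by
  rcases lt_trichotomy x 0 with hx | rfl | hx
  · rw [sign_of_neg hx, abs_of_neg hx, mul_neg_one]
  · simp
  · rw [sign_of_pos hx, abs_of_pos hx, mul_one]

lemma mul_sign_le_abs (x y : ℝ) : x * sign y ≤ |x| := by
  rcases sign_apply_eq y with hy | hy | hy <;> rw [hy]
  · simpa using neg_le_abs x
  · simp
  · simpa using le_abs_self x

lemma sub_mul_sign_flux_le (x y s t : ℝ) (ht : 0 ≤ t) :
    (x - y) * ((t + 1) * sign y - t * sign x - s) ≤ (|x| - x * s) - (|y| - y * s) := by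
  have hxy := mul_le_mul_of_nonneg_left (mul_sign_le_abs x y) ht
  have hyx := mul_le_mul_of_nonneg_left (mul_sign_le_abs y x) ht
  nlinarith [mul_sign_self x, mul_sign_self y, mul_sign_le_abs x y]

lemma le_mul_sign_flux (x y s t : ℝ) (ht : 0 ≤ t) :
    |x| - x * s ≤ x * ((t + 1) * sign x - t * sign y - s) := by
  have hxy := mul_le_mul_of_nonneg_left (mul_sign_le_abs x y) ht
  nlinarith [mul_sign_self x]

end Real

lemma sum_Ico_le_of_le_mul_sub {f c g : ℕ → ℝ} {m : ℕ}
    (hf : ∀ i, m < i → f i ≤ c i * (g i - g (i + 1))) (hc : AntitoneOn c (Set.Ici m))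
    (hg : ∀ i, 0 ≤ g i) {n : ℕ} (hn : m + 1 ≤ n) :
    ∑ i ∈ Ico (m + 1) n, f i ≤ c m * g (m + 1) - c (n - 1) * g n := by
  induction n, hn using Nat.le_induction with
  | base => simp
  | succ n hn ih =>
    rw [sum_Ico_succ_top hn, Nat.add_sub_cancel]
    have hcn : c n ≤ c (n - 1) := hc (by simp; omega) (by simp; omega) (by omega)
    have hfn := hf n (by omega)
    nlinarith [mul_le_mul_of_nonneg_right hcn (hg n)]

/-- No summability is needed: the junk value `0` of a divergent `tsum` obeys the same bound. -/
lemma tsum_le_of_le_mul_sub {f c g : ℕ → ℝ} {m : ℕ} (hf0 : ∀ i ≤ m, f i = 0)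
    (hf : ∀ i, m < i → f i ≤ c i * (g i - g (i + 1))) (hc : AntitoneOn c (Set.Ici m))
    (hc0 : ∀ i, m ≤ i → 0 ≤ c i) (hg : ∀ i, 0 ≤ g i) :
    ∑' i, f i ≤ c m * g (m + 1) := by
  have hbound : 0 ≤ c m * g (m + 1) := mul_nonneg (hc0 m le_rfl) (hg _)
  by_cases hsum : Summable f
  swap
  · rw [tsum_eq_zero_of_not_summable hsum]
    exact hbound
  refine hsum.tsum_le_of_sum_range_le fun n => ?_
  rcases le_or_gt n (m + 1) with hn | hn
  · rw [sum_eq_zero fun i hi => hf0 i (by simp at hi; omega)]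
    exact hbound
  rw [← sum_range_add_sum_Ico _ hn.le, sum_eq_zero fun i hi => hf0 i (by simp at hi; omega),
    zero_add]
  have := sum_Ico_le_of_le_mul_sub hf hc hg hn.le
  nlinarith [mul_nonneg (hc0 (n - 1) (by omega)) (hg n)]

lemma antitoneOn_of_detailed_balance {a b Q : ℕ → ℝ} {Nz : ℕ}
    (hQ : ∀ i, 1 ≤ i → 0 ≤ Q i)
    (hdb : ∀ i, 1 ≤ i → Q i * Q 1 * a i = Q (i + 1) * b (i + 1))
    (hfrag : ∀ i, Nz ≤ i → Q 1 * a i ≤ b i) (hNz : 1 ≤ Nz) :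
    AntitoneOn (fun i => Q i * Q 1 * a i) (Set.Ici Nz) :=
  antitoneOn_nat_Ici_of_succ_le fun i hi => by
    rw [hdb i (by omega), mul_assoc]
    exact mul_le_mul_of_nonneg_left (hfrag (i + 1) (by omega)) (hQ (i + 1) (by omega))

theorem truncated_transport_dissipative_X1_general (a b Q : ℕ → ℝ) (Nz Ntil : ℕ)
    (hpos : ∀ i, 1 ≤ i → 0 < a i ∧ 0 < b i ∧ 0 < Q i)
    (hdb : ∀ i, 1 ≤ i → Q i * Q 1 * a i = Q (i + 1) * b (i + 1))
    (hfrag : ∀ i, Nz ≤ i → Q 1 * a i ≤ b i)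
    (hNz : 1 ≤ Nz) (hNtil : Nz + 1 ≤ Ntil)
    (h : ℕ → ℝ) :
    (∑' i : ℕ, if Ntil ≤ i then
        Q i * Q 1 * a i * (h i - h (i + 1)) *
          (((i + 1 : ℕ) : ℝ) * Real.sign (h (i + 1)) - (i : ℝ) * Real.sign (h i)
            - (1 : ℝ) * Real.sign (h 1))
      else 0)
      - Q (Ntil - 1) * Q 1 * a (Ntil - 1) * h Ntil *
          ((Ntil : ℝ) * Real.sign (h Ntil) - ((Ntil - 1 : ℕ) : ℝ) * Real.sign (h (Ntil - 1))
            - (1 : ℝ) * Real.sign (h 1)) ≤ 0 := by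
  obtain ⟨m, rfl⟩ : ∃ m, Ntil = m + 1 := ⟨Ntil - 1, by omega⟩
  set s := Real.sign (h 1)
  set c : ℕ → ℝ := fun i => Q i * Q 1 * a i
  set g : ℕ → ℝ := fun i => |h i| - h i * s
  have hc0 : ∀ i, 1 ≤ i → 0 ≤ c i := fun i hi =>
    (mul_pos (mul_pos (hpos i hi).2.2 (hpos 1 le_rfl).2.2) (hpos i hi).1).le
  have hanti : AntitoneOn c (Set.Ici m) :=
    (antitoneOn_of_detailed_balance (fun i hi => (hpos i hi).2.2.le) hdb hfrag hNz).mono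
      (Set.Ici_subset_Ici.mpr (by omega))
  have hflux : ∑' i : ℕ, (if m + 1 ≤ i then
        Q i * Q 1 * a i * (h i - h (i + 1)) *
          (((i + 1 : ℕ) : ℝ) * Real.sign (h (i + 1)) - (i : ℝ) * Real.sign (h i) - 1 * s)
      else 0) ≤ c m * g (m + 1) := by
    refine tsum_le_of_le_mul_sub (fun i hi => if_neg (by omega)) (fun i hi => ?_) hanti
      (fun i hi => hc0 i (by omega)) fun i => sub_nonneg.mpr (Real.mul_sign_le_abs _ _)
    rw [if_pos (Nat.succ_le_of_lt hi)]
    refine le_of_eq_of_le ?_ (mul_le_mul_of_nonneg_left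
      (Real.sub_mul_sign_flux_le _ _ s _ i.cast_nonneg) (hc0 i (by omega)))
    push_cast
    ring
  have hboundary : c m * g (m + 1) ≤ Q (m + 1 - 1) * Q 1 * a (m + 1 - 1) * h (m + 1) *
      (((m + 1 : ℕ) : ℝ) * Real.sign (h (m + 1))
        - ((m + 1 - 1 : ℕ) : ℝ) * Real.sign (h (m + 1 - 1)) - 1 * s) := by
    refine (mul_le_mul_of_nonneg_left (Real.le_mul_sign_flux _ (h m) s _ m.cast_nonneg)
      (hc0 m (by omega))).trans_eq ?_
    push_cast [Nat.add_sub_cancel]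
    ring
  linarith

/-- Dissipativity of the truncated transport part `A` of the linearized Becker–Döring
operator on `X₁ = ℓ¹(Q_i i)`: testing the weak form against `φ_i = i · sgn(h_i)` gives a
nonpositive pairing for every finitely supported `h` with zero mass. -/
theorem truncated_transport_dissipative_X1 (a b Q : ℕ → ℝ) (Nz Ntil : ℕ)
    (hpos : ∀ i, 1 ≤ i → 0 < a i ∧ 0 < b i ∧ 0 < Q i)
    (hdb : ∀ i, 1 ≤ i → Q i * Q 1 * a i = Q (i + 1) * b (i + 1))
    (hfrag : ∀ i, Nz ≤ i → Q 1 * a i ≤ b i)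
    (hNz : 1 ≤ Nz) (hNtil : Nz + 1 ≤ Ntil)
    (h : ℕ → ℝ) (hsupp : (Function.support h).Finite)
    (hmass : (∑' i : ℕ, Q i * (i : ℝ) * h i) = 0) :
    (∑' i : ℕ, if Ntil ≤ i then
        Q i * Q 1 * a i * (h i - h (i + 1)) *
          (((i + 1 : ℕ) : ℝ) * Real.sign (h (i + 1)) - (i : ℝ) * Real.sign (h i)
            - (1 : ℝ) * Real.sign (h 1))
      else 0)
      - Q (Ntil - 1) * Q 1 * a (Ntil - 1) * h Ntil *
          ((Ntil : ℝ) * Real.sign (h Ntil) - ((Ntil - 1 : ℕ) : ℝ) * Real.sign (h (Ntil - 1))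
            - (1 : ℝ) * Real.sign (h 1)) ≤ 0 :=
  truncated_transport_dissipative_X1_general a b Q Nz Ntil hpos hdb hfrag hNz hNtil h
end

section
/- Let (Q_i) be positive with 0 < c ≤ Q_i/Q_{i+1} ≤ C < ∞, and a_i ≤ C₂ i, b_i ≤ C₂ i. Let L be the linearized Becker–Döring operator given weakly by ∑ Q_i (Lh)_i φ_i = ∑ a_i Q_i Q_1 (h_1 + h_i - h_{i+1})(φ_{i+1} - φ_i - φ_1). Then for every m ≥ 0 there exists C_m such that ∑ Q_i i^{1+m} |(Lh)_i| ≤ C_m ∑ Q_i i^{2+m} |h_i| for all sequences h with finite right-hand side; i.e., ‖Lh‖_{X_{1+m}} ≤ C_m ‖h‖_{X_{2+m}}. -/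
/-- The linearized Becker–Döring operator `L`, in strong form, obtained from the weak form
`∑ Q_i (Lh)_i φ_i = ∑_{i≥1} a_i Q_i Q_1 (h_1 + h_i - h_{i+1})(φ_{i+1} - φ_i - φ_1)`. -/
noncomputable def BDLop (a Q : ℕ → ℝ) (h : ℕ → ℝ) : ℕ → ℝ := fun i =>
  if i = 0 then 0
  else if i = 1 then
    (-(a 1 * Q 1 * Q 1 * (h 1 + h 1 - h 2))
      - ∑' j : ℕ, if 1 ≤ j then a j * Q j * Q 1 * (h 1 + h j - h (j + 1)) else 0) / Q 1
  else
    (a (i - 1) * Q (i - 1) * Q 1 * (h 1 + h (i - 1) - h i)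
      - a i * Q i * Q 1 * (h 1 + h i - h (i + 1))) / Q i

/-!
With the flux `F_j = a_j Q_j Q_1 (h_1 + h_j - h_{j+1})` one has `Q_i (Lh)_i = F_{i-1} - F_i` for
`i ≥ 2` and `Q_1 (Lh)_1 = -F_1 - ∑_{j ≥ 1} F_j`. Split `F_j = Q_1 h_1 · a_j Q_j + D_j`. Since
`a_j ≤ C₂ j` and `Q_j ≤ C Q_{j+1}`, the jump `D_j = a_j Q_j Q_1 (h_j - h_{j+1})` satisfies
`(j+1)^{1+m} |D_j| ≤ 2^{1+m} C₂ Q_1 (Q_j j^{2+m} |h_j| + C Q_{j+1} (j+1)^{2+m} |h_{j+1}|)`: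
this is where one moment is lost, and summing gives a multiple of `‖h‖_{X_{2+m}}`. What remains is
`Q_1 |h_1| ≤ ‖h‖_{X_{2+m}}` times the sums of `a_j Q_j` and of
`i^{1+m} |a_{i-1} Q_{i-1} - a_i Q_i|`, which need not converge. A divergent `tsum` is `0`, and the
bound survives this convention: the jump parts being summable, the left-hand side converges only
if `h_1 = 0` or these sums converge.
-/

theorem add_one_rpow_le_two_rpow_mul_rpow {x s : ℝ} (hx : 1 ≤ x) (hs : 0 ≤ s) :
    (x + 1) ^ s ≤ 2 ^ s * x ^ s := by
  rw [← Real.mul_rpow zero_le_two (by linarith)]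
  exact Real.rpow_le_rpow (by linarith) (by linarith) hs

theorem tsum_le_sum_range_add_tsum_nat_add {w : ℕ → ℝ} (hw : ∀ i, 0 ≤ w i) (k : ℕ) :
    ∑' i, w i ≤ ∑ i ∈ Finset.range k, w i + ∑' i, w (i + k) := by
  by_cases hs : Summable w
  · exact (hs.sum_add_tsum_nat_add k).ge
  · rw [tsum_eq_zero_of_not_summable hs]
    exact add_nonneg (Finset.sum_nonneg fun i _ => hw i) (tsum_nonneg fun i => hw (i + k))

theorem tsum_le_mul_tsum_add_tsum_of_abs_sub_le {ι : Type*} {f g p : ι → ℝ} {x : ℝ}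
    (hx : 0 ≤ x) (hg : ∀ i, 0 ≤ g i) (hp : Summable p) (hfg : ∀ i, |f i - x * g i| ≤ p i) :
    ∑' i, f i ≤ x * ∑' i, g i + ∑' i, p i := by
  by_cases hf : Summable f
  · have hd : Summable fun i => f i - x * g i := hp.of_norm_bounded hfg
    have hxg : Summable fun i => x * g i := by simpa using hf.sub hd
    calc ∑' i, f i = ∑' i, x * g i + ∑' i, (f i - x * g i) := by
          rw [← hxg.tsum_add hd]; simp
      _ ≤ x * ∑' i, g i + ∑' i, p i := by
          rw [tsum_mul_left]
          exact add_le_add le_rfl (hd.tsum_le_tsum (fun i => (le_abs_self _).trans (hfg i)) hp)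
  · rw [tsum_eq_zero_of_not_summable hf]
    exact add_nonneg (mul_nonneg hx (tsum_nonneg hg))
      (tsum_nonneg fun i => (abs_nonneg _).trans (hfg i))

theorem abs_tsum_mul_add_le {ι : Type*} {α β : ι → ℝ} (x : ℝ) (hβ : Summable β) :
    |∑' i, (x * α i + β i)| ≤ |x| * |∑' i, α i| + ∑' i, |β i| := by
  by_cases hs : Summable fun i => x * α i + β i
  · have hxα : Summable fun i => x * α i := (hs.sub hβ).congr fun i => add_sub_cancel_right _ _
    have hβ_abs : |∑' i, β i| ≤ ∑' i, |β i| := by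
      simpa only [Real.norm_eq_abs] using norm_tsum_le_tsum_norm hβ.norm
    rw [hxα.tsum_add hβ, tsum_mul_left, ← abs_mul]
    exact (abs_add_le _ _).trans (add_le_add le_rfl hβ_abs)
  · rw [tsum_eq_zero_of_not_summable hs, abs_zero]
    exact add_nonneg (by positivity) (tsum_nonneg fun i => abs_nonneg _)

section ShiftMajorant

variable {f u : ℕ → ℝ} {k C : ℝ}

theorem summable_of_le_add_shift (hf : ∀ i, 0 ≤ f i) (hu : Summable u)
    (hfu : ∀ i, f i ≤ k * (u (i + 1) + C * u (i + 2))) : Summable f :=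
  .of_nonneg_of_le hf hfu
    ((((summable_nat_add_iff 1).2 hu).add (((summable_nat_add_iff 2).2 hu).mul_left C)).mul_left k)

theorem tsum_le_of_le_add_shift (hk : 0 ≤ k) (hC : 0 ≤ C) (hf : ∀ i, 0 ≤ f i)
    (hu0 : ∀ i, 0 ≤ u i) (hu : Summable u) (hfu : ∀ i, f i ≤ k * (u (i + 1) + C * u (i + 2))) :
    ∑' i, f i ≤ k * (1 + C) * ∑' i, u i := by
  have hu1 : Summable fun i => u (i + 1) := (summable_nat_add_iff 1).2 hu
  have hu2 : Summable fun i => u (i + 2) := (summable_nat_add_iff 2).2 hu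
  have hle1 : ∑' i, u (i + 1) ≤ ∑' i, u i := tsum_comp_le_tsum_of_inj hu hu0 (add_left_injective 1)
  have hle2 : ∑' i, u (i + 2) ≤ ∑' i, u i := tsum_comp_le_tsum_of_inj hu hu0 (add_left_injective 2)
  calc ∑' i, f i ≤ ∑' i, k * (u (i + 1) + C * u (i + 2)) :=
        (summable_of_le_add_shift hf hu hfu).tsum_le_tsum hfu
          ((hu1.add (hu2.mul_left C)).mul_left k)
    _ = k * (∑' i, u (i + 1) + C * ∑' i, u (i + 2)) := by
        rw [tsum_mul_left, hu1.tsum_add (hu2.mul_left C), tsum_mul_left]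
    _ ≤ k * (∑' i, u i + C * ∑' i, u i) := by gcongr
    _ = k * (1 + C) * ∑' i, u i := by ring

end ShiftMajorant

namespace BeckerDoring

variable {a Q : ℕ → ℝ} {C₂ C m : ℝ}

noncomputable def momentTerm (Q : ℕ → ℝ) (k : ℝ) (h : ℕ → ℝ) (i : ℕ) : ℝ :=
  Q i * (i : ℝ) ^ k * |h i|

noncomputable def flux (a Q h : ℕ → ℝ) (j : ℕ) : ℝ :=
  a j * Q j * Q 1 * (h 1 + h j - h (j + 1))

noncomputable def fluxJump (a Q h : ℕ → ℝ) (j : ℕ) : ℝ :=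
  a j * Q j * Q 1 * (h j - h (j + 1))

noncomputable def jumpMoment (a Q h : ℕ → ℝ) (m : ℝ) (i : ℕ) : ℝ :=
  ((i : ℝ) + 2) ^ (1 + m) * |fluxJump a Q h (i + 1)|

noncomputable def eqFluxVariation (a Q : ℕ → ℝ) (m : ℝ) (i : ℕ) : ℝ :=
  ((i : ℝ) + 2) ^ (1 + m) * |a (i + 1) * Q (i + 1) - a (i + 2) * Q (i + 2)|

theorem nonneg_of_rate_le (ha : ∀ i, 1 ≤ i → 0 < a i ∧ a i ≤ C₂ * i) : 0 ≤ C₂ := by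
  obtain ⟨ha1, haC⟩ := ha 1 le_rfl
  simpa using ha1.le.trans haC

theorem momentTerm_zero (Q : ℕ → ℝ) {k : ℝ} (hk : k ≠ 0) (h : ℕ → ℝ) : momentTerm Q k h 0 = 0 := by
  simp [momentTerm, Real.zero_rpow hk]

theorem momentTerm_nonneg (hQ : ∀ i, 1 ≤ i → 0 < Q i) {k : ℝ} (hk : k ≠ 0) (h : ℕ → ℝ) (i : ℕ) :
    0 ≤ momentTerm Q k h i := by
  rcases Nat.eq_zero_or_pos i with rfl | hi
  · rw [momentTerm_zero Q hk]
  · exact mul_nonneg (mul_nonneg (hQ i hi).le (by positivity)) (abs_nonneg _)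

theorem flux_eq (a Q h : ℕ → ℝ) (j : ℕ) :
    flux a Q h j = Q 1 * h 1 * (a j * Q j) + fluxJump a Q h j := by
  unfold flux fluxJump; ring

theorem BDLop_one (a Q h : ℕ → ℝ) :
    BDLop a Q h 1 = (-flux a Q h 1 - ∑' j, flux a Q h (j + 1)) / Q 1 := by
  have hshift : ∑' j, flux a Q h (j + 1) = ∑' j, if 1 ≤ j then flux a Q h j else 0 := by
    rw [← Nat.succ_injective.tsum_eq (f := fun j => if 1 ≤ j then flux a Q h j else 0)]
    · simp
    · intro j hj
      obtain ⟨hj1, -⟩ : 1 ≤ j ∧ flux a Q h j ≠ 0 := by simpa using hj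
      exact ⟨j - 1, Nat.succ_pred_eq_of_pos hj1⟩
  rw [hshift]
  rfl

theorem BDLop_add_two (a Q h : ℕ → ℝ) (i : ℕ) :
    BDLop a Q h (i + 2) = (flux a Q h (i + 1) - flux a Q h (i + 2)) / Q (i + 2) := by
  simp [BDLop, flux]

theorem jumpMoment_nonneg (a Q h : ℕ → ℝ) (m : ℝ) (i : ℕ) : 0 ≤ jumpMoment a Q h m i := by
  unfold jumpMoment; positivity

theorem eqFluxVariation_nonneg (a Q : ℕ → ℝ) (m : ℝ) (i : ℕ) : 0 ≤ eqFluxVariation a Q m i := by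
  unfold eqFluxVariation; positivity

theorem abs_fluxJump_le_jumpMoment (h : ℕ → ℝ) (hm : 0 ≤ m) (i : ℕ) :
    |fluxJump a Q h (i + 1)| ≤ jumpMoment a Q h m i :=
  le_mul_of_one_le_left (abs_nonneg _) (Real.one_le_rpow (by linarith) (by linarith))

theorem jumpMoment_le (hQ : ∀ i, 1 ≤ i → 0 < Q i) (hQC : ∀ i, 1 ≤ i → Q i ≤ C * Q (i + 1))
    (ha : ∀ i, 1 ≤ i → 0 < a i ∧ a i ≤ C₂ * i) (hm : 0 ≤ m) (h : ℕ → ℝ) (i : ℕ) :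
    jumpMoment a Q h m i ≤ 2 ^ (1 + m) * C₂ * Q 1 *
      (momentTerm Q (2 + m) h (i + 1) + C * momentTerm Q (2 + m) h (i + 2)) := by
  set x : ℝ := (i : ℝ) + 1
  have hx : 1 ≤ x := by simp [x]
  have hQi := hQ (i + 1) (by omega)
  obtain ⟨hai, haC⟩ := ha (i + 1) (by omega)
  rw [Nat.cast_succ] at haC
  have hC₂ := nonneg_of_rate_le ha
  have hjump : |fluxJump a Q h (i + 1)| ≤
      a (i + 1) * Q (i + 1) * Q 1 * (|h (i + 1)| + |h (i + 2)|) := by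
    have hpos : 0 < a (i + 1) * Q (i + 1) * Q 1 := mul_pos (mul_pos hai hQi) (hQ 1 le_rfl)
    rw [fluxJump, abs_mul, abs_of_pos hpos]
    exact mul_le_mul_of_nonneg_left (abs_sub _ _) hpos.le
  have hweight : (x + 1) ^ (1 + m) * a (i + 1) ≤ 2 ^ (1 + m) * C₂ * x ^ (2 + m) := by
    calc (x + 1) ^ (1 + m) * a (i + 1) ≤ 2 ^ (1 + m) * x ^ (1 + m) * (C₂ * x) := by
          gcongr
          exact add_one_rpow_le_two_rpow_mul_rpow hx (by linarith)
      _ = 2 ^ (1 + m) * C₂ * x ^ (2 + m) := by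
          rw [show (2 : ℝ) + m = 1 + m + 1 by ring, Real.rpow_add_one (by positivity)]; ring
  have hratio : Q (i + 1) * x ^ (2 + m) ≤ C * (Q (i + 2) * (x + 1) ^ (2 + m)) := by
    have hQC' := hQC (i + 1) (by omega)
    calc Q (i + 1) * x ^ (2 + m) ≤ (C * Q (i + 2)) * (x + 1) ^ (2 + m) :=
          mul_le_mul hQC' (Real.rpow_le_rpow (by positivity) (by linarith) (by linarith))
            (by positivity) (hQi.le.trans hQC')
      _ = C * (Q (i + 2) * (x + 1) ^ (2 + m)) := by ring
  have hcast₁ : ((i + 1 : ℕ) : ℝ) = x := by push_cast; ring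
  have hcast₂ : ((i + 2 : ℕ) : ℝ) = x + 1 := by push_cast; ring
  calc jumpMoment a Q h m i
      ≤ (x + 1) ^ (1 + m) * (a (i + 1) * Q (i + 1) * Q 1 * (|h (i + 1)| + |h (i + 2)|)) := by
        rw [jumpMoment, show (i : ℝ) + 2 = x + 1 by ring]; gcongr
    _ = ((x + 1) ^ (1 + m) * a (i + 1)) * Q 1 *
          (Q (i + 1) * |h (i + 1)| + Q (i + 1) * |h (i + 2)|) := by ring
    _ ≤ (2 ^ (1 + m) * C₂ * x ^ (2 + m)) * Q 1 *
          (Q (i + 1) * |h (i + 1)| + Q (i + 1) * |h (i + 2)|) := by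
        gcongr
        exact (hQ 1 le_rfl).le
    _ = 2 ^ (1 + m) * C₂ * Q 1 *
          (momentTerm Q (2 + m) h (i + 1) + (Q (i + 1) * x ^ (2 + m)) * |h (i + 2)|) := by
        rw [momentTerm, hcast₁]; ring
    _ ≤ 2 ^ (1 + m) * C₂ * Q 1 *
          (momentTerm Q (2 + m) h (i + 1) + C * (Q (i + 2) * (x + 1) ^ (2 + m)) * |h (i + 2)|) := by
        have : 0 ≤ 2 ^ (1 + m) * C₂ * Q 1 := by have := hQ 1 le_rfl; positivity
        gcongr
    _ = _ := by unfold momentTerm; rw [hcast₂]; ring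

theorem summable_jumpMoment (hQ : ∀ i, 1 ≤ i → 0 < Q i) (hQC : ∀ i, 1 ≤ i → Q i ≤ C * Q (i + 1))
    (ha : ∀ i, 1 ≤ i → 0 < a i ∧ a i ≤ C₂ * i) (hm : 0 ≤ m) {h : ℕ → ℝ}
    (hh : Summable (momentTerm Q (2 + m) h)) : Summable (jumpMoment a Q h m) :=
  summable_of_le_add_shift (jumpMoment_nonneg a Q h m) hh (jumpMoment_le hQ hQC ha hm h)

theorem tsum_jumpMoment_le (hQ : ∀ i, 1 ≤ i → 0 < Q i) (hC : 0 ≤ C)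
    (hQC : ∀ i, 1 ≤ i → Q i ≤ C * Q (i + 1)) (ha : ∀ i, 1 ≤ i → 0 < a i ∧ a i ≤ C₂ * i)
    (hm : 0 ≤ m) {h : ℕ → ℝ} (hh : Summable (momentTerm Q (2 + m) h)) :
    ∑' i, jumpMoment a Q h m i ≤
      2 ^ (1 + m) * C₂ * Q 1 * (1 + C) * ∑' i, momentTerm Q (2 + m) h i := by
  have := hQ 1 le_rfl
  have := nonneg_of_rate_le ha
  exact tsum_le_of_le_add_shift (by positivity) hC (jumpMoment_nonneg a Q h m)
    (momentTerm_nonneg hQ (by linarith) h) hh (jumpMoment_le hQ hQC ha hm h)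

theorem momentTerm_BDLop_one_le (hQ1 : 0 < Q 1) (ha1 : 0 ≤ a 1) (hm : 0 ≤ m) {h : ℕ → ℝ}
    (hJ : Summable (jumpMoment a Q h m)) :
    momentTerm Q (1 + m) (BDLop a Q h) 1 ≤
      Q 1 * |h 1| * (a 1 * Q 1 + |∑' j, a (j + 1) * Q (j + 1)|) +
        2 * ∑' i, jumpMoment a Q h m i := by
  have hjump (i : ℕ) := abs_fluxJump_le_jumpMoment (a := a) (Q := Q) h hm i
  have hJ0 : jumpMoment a Q h m 0 ≤ ∑' i, jumpMoment a Q h m i :=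
    hJ.le_tsum 0 fun i _ => jumpMoment_nonneg a Q h m i
  have hfirst : |flux a Q h 1| ≤ Q 1 * |h 1| * (a 1 * Q 1) + ∑' i, jumpMoment a Q h m i := by
    rw [flux_eq]
    refine (abs_add_le _ _).trans (add_le_add (le_of_eq ?_) ((hjump 0).trans hJ0))
    rw [abs_mul, abs_mul, abs_of_pos hQ1, abs_of_nonneg (mul_nonneg ha1 hQ1.le)]
  have htail : |∑' j, flux a Q h (j + 1)| ≤
      Q 1 * |h 1| * |∑' j, a (j + 1) * Q (j + 1)| + ∑' i, jumpMoment a Q h m i := by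
    have hsum : Summable fun j => fluxJump a Q h (j + 1) := hJ.of_norm_bounded hjump
    simp_rw [flux_eq]
    refine (abs_tsum_mul_add_le _ hsum).trans (add_le_add ?_ ?_)
    · rw [abs_mul, abs_of_pos hQ1]
    · exact hsum.abs.tsum_le_tsum hjump hJ
  calc momentTerm Q (1 + m) (BDLop a Q h) 1 = |flux a Q h 1 + ∑' j, flux a Q h (j + 1)| := by
        rw [momentTerm, BDLop_one, Nat.cast_one, Real.one_rpow, abs_div, abs_of_pos hQ1, ← neg_add',
          abs_neg]
        field_simp
    _ ≤ _ := (abs_add_le _ _).trans (by linarith)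

theorem abs_momentTerm_BDLop_add_two_sub_le (i : ℕ) (hQ1 : 0 < Q 1) (hQi : 0 < Q (i + 2))
    (hm : 0 ≤ m) (h : ℕ → ℝ) :
    |momentTerm Q (1 + m) (BDLop a Q h) (i + 2) - Q 1 * |h 1| * eqFluxVariation a Q m i| ≤
      jumpMoment a Q h m i + jumpMoment a Q h m (i + 1) := by
  set w : ℝ := ((i : ℝ) + 2) ^ (1 + m)
  set A := Q 1 * h 1 * (a (i + 1) * Q (i + 1) - a (i + 2) * Q (i + 2))
  set E := fluxJump a Q h (i + 1) - fluxJump a Q h (i + 2)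
  have hterm : momentTerm Q (1 + m) (BDLop a Q h) (i + 2) = w * |A + E| := by
    have hF : flux a Q h (i + 1) - flux a Q h (i + 2) = A + E := by
      rw [flux_eq, flux_eq]; ring
    rw [momentTerm, BDLop_add_two, hF, abs_div, abs_of_pos hQi]
    push_cast
    field_simp
    rw [mul_comm]
  have hvar : Q 1 * |h 1| * eqFluxVariation a Q m i = w * |A| := by
    simp only [eqFluxVariation, A, w, abs_mul, abs_of_pos hQ1]; ring
  have hw : w ≤ (((i + 1 : ℕ) : ℝ) + 2) ^ (1 + m) :=
    Real.rpow_le_rpow (by positivity) (by push_cast; linarith) (by linarith)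
  rw [hterm, hvar, ← mul_sub, abs_mul, abs_of_nonneg (by positivity)]
  calc w * |(|A + E| - |A|)| ≤ w * |E| :=
        mul_le_mul_of_nonneg_left (by simpa using abs_abs_sub_abs_le_abs_sub (A + E) A)
          (by positivity)
    _ ≤ w * |fluxJump a Q h (i + 1)| + w * |fluxJump a Q h (i + 2)| := by
        rw [← mul_add]; gcongr; exact abs_sub _ _
    _ ≤ jumpMoment a Q h m i + jumpMoment a Q h m (i + 1) := by
        rw [jumpMoment, jumpMoment]; gcongr

theorem tsum_momentTerm_BDLop_le (hQ : ∀ i, 1 ≤ i → 0 < Q i) (ha1 : 0 ≤ a 1) (hm : 0 ≤ m)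
    {h : ℕ → ℝ} (hJ : Summable (jumpMoment a Q h m)) :
    ∑' i, momentTerm Q (1 + m) (BDLop a Q h) i ≤
      Q 1 * |h 1| * (a 1 * Q 1 + |∑' j, a (j + 1) * Q (j + 1)| + ∑' i, eqFluxVariation a Q m i) +
        4 * ∑' i, jumpMoment a Q h m i := by
  have hQ1 := hQ 1 le_rfl
  have hm1 : 1 + m ≠ 0 := by positivity
  have hsplit := tsum_le_sum_range_add_tsum_nat_add (momentTerm_nonneg hQ hm1 (BDLop a Q h)) 2
  rw [Finset.sum_range_succ, Finset.sum_range_one, momentTerm_zero Q hm1, zero_add] at hsplit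
  have hJ₁ : Summable fun i => jumpMoment a Q h m (i + 1) := (summable_nat_add_iff 1).2 hJ
  have htail := tsum_le_mul_tsum_add_tsum_of_abs_sub_le (by positivity)
    (eqFluxVariation_nonneg a Q m) (hJ.add hJ₁)
    fun i => abs_momentTerm_BDLop_add_two_sub_le i hQ1 (hQ (i + 2) (by omega)) hm h
  rw [hJ.tsum_add hJ₁] at htail
  have hJshift : ∑' i, jumpMoment a Q h m (i + 1) ≤ ∑' i, jumpMoment a Q h m i :=
    tsum_comp_le_tsum_of_inj hJ (jumpMoment_nonneg a Q h m) (add_left_injective 1)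
  linarith [momentTerm_BDLop_one_le hQ1 ha1 hm hJ]

end BeckerDoring

open BeckerDoring in
theorem BDLop_moment_bound_general (a Q : ℕ → ℝ) (C₂ c C : ℝ)
    (hQ : ∀ i, 1 ≤ i → 0 < Q i) (hC : 0 < C)
    (hQratio : ∀ i, 1 ≤ i → c ≤ Q i / Q (i + 1) ∧ Q i / Q (i + 1) ≤ C)
    (ha : ∀ i, 1 ≤ i → 0 < a i ∧ a i ≤ C₂ * i)
    (m : ℝ) (hm : 0 ≤ m) :
    ∃ Cm : ℝ, 0 < Cm ∧ ∀ h : ℕ → ℝ,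
      Summable (fun i => Q i * (i : ℝ) ^ (2 + m) * |h i|) →
      (∑' i : ℕ, Q i * (i : ℝ) ^ (1 + m) * |BDLop a Q h i|) ≤
        Cm * ∑' i : ℕ, Q i * (i : ℝ) ^ (2 + m) * |h i| := by
  have hQ1 := hQ 1 le_rfl
  have ha1 := (ha 1 le_rfl).1
  have hC₂ := nonneg_of_rate_le ha
  have hQC (i : ℕ) (hi : 1 ≤ i) : Q i ≤ C * Q (i + 1) :=
    (div_le_iff₀ (hQ (i + 1) (by omega))).1 (hQratio i hi).2
  set S := |∑' j, a (j + 1) * Q (j + 1)| + ∑' i, eqFluxVariation a Q m i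
  have hS : 0 ≤ S := add_nonneg (abs_nonneg _) (tsum_nonneg (eqFluxVariation_nonneg a Q m))
  set K := 2 ^ (1 + m) * C₂ * Q 1 * (1 + C)
  refine ⟨a 1 * Q 1 + S + 4 * K, by positivity, fun h hh => ?_⟩
  change ∑' i, momentTerm Q (1 + m) (BDLop a Q h) i ≤ _ * ∑' i, momentTerm Q (2 + m) h i
  have hh1 : Q 1 * |h 1| ≤ ∑' i, momentTerm Q (2 + m) h i := by
    simpa [momentTerm] using hh.le_tsum 1 fun i _ => momentTerm_nonneg hQ (by positivity) h i
  set R := ∑' i, momentTerm Q (2 + m) h i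
  have hJ := tsum_jumpMoment_le hQ hC.le hQC ha hm hh
  calc ∑' i, momentTerm Q (1 + m) (BDLop a Q h) i
      ≤ Q 1 * |h 1| * (a 1 * Q 1 + S) + 4 * ∑' i, jumpMoment a Q h m i := by
        simpa only [S, add_assoc] using
          tsum_momentTerm_BDLop_le hQ ha1.le hm (summable_jumpMoment hQ hQC ha hm hh)
    _ ≤ R * (a 1 * Q 1 + S) + 4 * (K * R) := by gcongr
    _ = (a 1 * Q 1 + S + 4 * K) * R := by ring

/-- Moment-loss boundedness of the linearized Becker–Döring operator:
`‖Lh‖_{X_{1+m}} ≤ C_m ‖h‖_{X_{2+m}}`. -/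
theorem BDLop_moment_bound (a b Q : ℕ → ℝ) (C₂ c C : ℝ)
    (hQ : ∀ i, 1 ≤ i → 0 < Q i) (hc : 0 < c) (hC : 0 < C)
    (hQratio : ∀ i, 1 ≤ i → c ≤ Q i / Q (i + 1) ∧ Q i / Q (i + 1) ≤ C)
    (ha : ∀ i, 1 ≤ i → 0 < a i ∧ a i ≤ C₂ * i)
    (hb : ∀ i, 1 ≤ i → 0 < b i ∧ b i ≤ C₂ * i)
    (m : ℝ) (hm : 0 ≤ m) :
    ∃ Cm : ℝ, 0 < Cm ∧ ∀ h : ℕ → ℝ,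
      Summable (fun i => Q i * (i : ℝ) ^ (2 + m) * |h i|) →
      (∑' i : ℕ, Q i * (i : ℝ) ^ (1 + m) * |BDLop a Q h i|) ≤
        Cm * ∑' i : ℕ, Q i * (i : ℝ) ^ (2 + m) * |h i| :=
  BDLop_moment_bound_general a Q C₂ c C hQ hC hQratio ha m hm
end

section
/- Let Y be a Banach space, A the generator of a semigroup V(t) on Y with ‖V(t)‖ ≤ M_V e^{-λ_Y t}, Z ⊂ Y continuously embedded, B ∈ L(Y,Z) bounded, and suppose A+B generates a semigroup U^Z(t) on Z with ‖U^Z(t)‖_{L(Z)} ≤ M_Z e^{-λ_Z t} where λ_Z > λ_Y. Then A+B generates a semigroup U^Y(t) on Y satisfying ‖U^Y(t)‖_{L(Y)} ≤ M_V(1 + M_Z ‖B‖ (λ_Z - λ_Y)^{-1}) e^{-λ_Y t} for all t ≥ 0. -/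
/-!
Bound the two terms of Duhamel's formula separately. In the integral term `U^Y(t-r) B V(r) h`
the vector `B V(r) h` lies in `Z`, where `U^Y` agrees with `U^Z`, so the integrand decays like
`e^{-λ_Z (t-r)} e^{-λ_Y r} = e^{-λ_Y t} e^{-(λ_Z - λ_Y)(t-r)}`; the gap `λ_Z - λ_Y > 0` makes
the integral of the last factor at most `(λ_Z - λ_Y)⁻¹`, uniformly in `t`.
-/

open MeasureTheory Real

lemma integral_exp_neg_mul_sub (c t : ℝ) (hc : c ≠ 0) :
    ∫ r in (0 : ℝ)..t, exp (-c * (t - r)) = c⁻¹ * (1 - exp (-c * t)) := by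
  rw [intervalIntegral.integral_comp_sub_left (fun s => exp (-c * s)),
    intervalIntegral.integral_comp_mul_left exp (neg_ne_zero.2 hc), integral_exp]
  simp only [inv_neg, sub_zero, neg_mul, sub_self, mul_zero, exp_zero, smul_eq_mul]
  ring

lemma integral_exp_neg_mul_sub_le_inv (t : ℝ) {c : ℝ} (hc : 0 < c) :
    ∫ r in (0 : ℝ)..t, exp (-c * (t - r)) ≤ c⁻¹ := by
  rw [integral_exp_neg_mul_sub c t hc.ne']
  exact mul_le_of_le_one_right (inv_nonneg.2 hc.le) (sub_le_self _ (exp_pos _).le)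

lemma norm_intervalIntegral_le_of_norm_le_mul_exp {E : Type*} [NormedAddCommGroup E]
    [NormedSpace ℝ E] {f : ℝ → E} {t c K : ℝ} (ht : 0 ≤ t) (hc : 0 < c) (hK : 0 ≤ K)
    (hf : ∀ r ∈ Set.Ioc 0 t, ‖f r‖ ≤ K * exp (-c * (t - r))) :
    ‖∫ r in (0 : ℝ)..t, f r‖ ≤ K * c⁻¹ :=
  calc ‖∫ r in (0 : ℝ)..t, f r‖ ≤ ∫ r in (0 : ℝ)..t, K * exp (-c * (t - r)) :=
        intervalIntegral.norm_integral_le_of_norm_le ht (.of_forall hf)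
          (by apply Continuous.intervalIntegrable; fun_prop)
    _ = K * ∫ r in (0 : ℝ)..t, exp (-c * (t - r)) := intervalIntegral.integral_const_mul _ _
    _ ≤ K * c⁻¹ := mul_le_mul_of_nonneg_left (integral_exp_neg_mul_sub_le_inv t hc) hK

lemma exp_neg_mul_sub_mul_exp_neg_mul (a b t r : ℝ) :
    exp (-a * (t - r)) * exp (-b * r) = exp (-b * t) * exp (-(a - b) * (t - r)) := by
  rw [← exp_add, ← exp_add]
  ring_nf

lemma nonneg_of_norm_le_mul_exp {E : Type*} [SeminormedAddCommGroup E] {x : ℝ → E}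
    {M lam : ℝ} (hx : ∀ t : ℝ, 0 ≤ t → ‖x t‖ ≤ M * exp (-lam * t)) : 0 ≤ M := by
  simpa using (norm_nonneg _).trans (hx 0 le_rfl)

lemma norm_embedding_comp_le {Y Z : Type*} [NormedAddCommGroup Y] [NormedSpace ℝ Y]
    [NormedAddCommGroup Z] [NormedSpace ℝ Z] {ι : Z →L[ℝ] Y} {V : ℝ → Y →L[ℝ] Y}
    {UZ : ℝ → Z →L[ℝ] Z} {B : Y →L[ℝ] Z} {MV MZ lamY lamZ : ℝ}
    (hι : ∀ z : Z, ‖ι z‖ ≤ ‖z‖) (hV : ∀ t : ℝ, 0 ≤ t → ‖V t‖ ≤ MV * exp (-lamY * t))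
    (hUZ : ∀ t : ℝ, 0 ≤ t → ‖UZ t‖ ≤ MZ * exp (-lamZ * t))
    {r t : ℝ} (hr : 0 ≤ r) (hrt : r ≤ t) (h : Y) :
    ‖ι (UZ (t - r) (B (V r h)))‖ ≤
      MZ * ‖B‖ * (MV * exp (-lamY * t) * ‖h‖) * exp (-(lamZ - lamY) * (t - r)) := by
  have htr : 0 ≤ t - r := sub_nonneg.2 hrt
  have hMZ : 0 ≤ MZ * exp (-lamZ * (t - r)) := (norm_nonneg _).trans (hUZ _ htr)
  calc ‖ι (UZ (t - r) (B (V r h)))‖ ≤ ‖UZ (t - r) (B (V r h))‖ := hι _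
    _ ≤ MZ * exp (-lamZ * (t - r)) * (‖B‖ * (MV * exp (-lamY * r) * ‖h‖)) := by
        refine ((UZ _).le_of_opNorm_le (hUZ _ htr) _).trans ?_
        gcongr
        exact (B.le_opNorm _).trans <| by gcongr; exact (V r).le_of_opNorm_le (hV r hr) h
    _ = MZ * ‖B‖ * MV * ‖h‖ * (exp (-lamZ * (t - r)) * exp (-lamY * r)) := by ring
    _ = _ := by rw [exp_neg_mul_sub_mul_exp_neg_mul]; ring

theorem semigroup_extension_principle_general
    {Y Z : Type*} [NormedAddCommGroup Y] [NormedSpace ℝ Y]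
    [NormedAddCommGroup Z] [NormedSpace ℝ Z]
    (ι : Z →L[ℝ] Y) (hι : ∀ z : Z, ‖ι z‖ ≤ ‖z‖)
    (V : ℝ → Y →L[ℝ] Y) (UZ : ℝ → Z →L[ℝ] Z) (UY : ℝ → Y →L[ℝ] Y)
    (B : Y →L[ℝ] Z)
    (MV MZ lamY lamZ : ℝ) (hlam : lamY < lamZ)
    -- V is the semigroup generated by A on Y, with decay
    (hV : ∀ t : ℝ, 0 ≤ t → ‖V t‖ ≤ MV * Real.exp (-lamY * t))
    -- U^Z is the semigroup generated by A+B on Z, with decay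
    (hUZ : ∀ t : ℝ, 0 ≤ t → ‖UZ t‖ ≤ MZ * Real.exp (-lamZ * t))
    -- intertwining: U^Y restricted to Z agrees with U^Z
    (hcompat : ∀ t : ℝ, 0 ≤ t → ∀ z : Z, UY t (ι z) = ι (UZ t z))
    -- Duhamel's formula
    (hDuhamel : ∀ t : ℝ, 0 ≤ t → ∀ h : Y,
      UY t h = V t h + ∫ r in (0 : ℝ)..t, UY (t - r) (ι (B (V r h)))) :
    ∀ t : ℝ, 0 ≤ t →
      ‖UY t‖ ≤ MV * (1 + MZ * ‖B‖ * (lamZ - lamY)⁻¹) * Real.exp (-lamY * t) := by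
  intro t ht
  have hMV : 0 ≤ MV := nonneg_of_norm_le_mul_exp hV
  have hMZ : 0 ≤ MZ := nonneg_of_norm_le_mul_exp hUZ
  have hgap : 0 < lamZ - lamY := sub_pos.2 hlam
  refine (UY t).opNorm_le_bound (by positivity) fun h => ?_
  have hintegral : ‖∫ r in (0 : ℝ)..t, UY (t - r) (ι (B (V r h)))‖ ≤
      MZ * ‖B‖ * (MV * exp (-lamY * t) * ‖h‖) * (lamZ - lamY)⁻¹ := by
    refine norm_intervalIntegral_le_of_norm_le_mul_exp ht hgap (by positivity) fun r hr => ?_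
    rw [hcompat _ (sub_nonneg.2 hr.2)]
    exact norm_embedding_comp_le hι hV hUZ hr.1.le hr.2 h
  rw [hDuhamel t ht h]
  calc ‖V t h + ∫ r in (0 : ℝ)..t, UY (t - r) (ι (B (V r h)))‖
      ≤ MV * exp (-lamY * t) * ‖h‖ + MZ * ‖B‖ * (MV * exp (-lamY * t) * ‖h‖) * (lamZ - lamY)⁻¹ :=
        (norm_add_le _ _).trans (add_le_add ((V t).le_of_opNorm_le (hV t ht) h) hintegral)
    _ = MV * (1 + MZ * ‖B‖ * (lamZ - lamY)⁻¹) * exp (-lamY * t) * ‖h‖ := by ring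

/-- Semigroup version of the Gualdani–Mischler–Mouhot extension principle: the decay of the
semigroup generated by `A+B` transfers from the smaller space `Z` (continuously embedded in
`Y` via `ι`) to the larger space `Y`.  Generation is encoded through the semigroup axioms,
the intertwining relation and Duhamel's formula `U^Y(t)h = V(t)h + ∫₀ᵗ U^Y(t-r) B V(r) h dr`. -/
theorem semigroup_extension_principle
    {Y Z : Type*} [NormedAddCommGroup Y] [NormedSpace ℝ Y] [CompleteSpace Y]
    [NormedAddCommGroup Z] [NormedSpace ℝ Z] [CompleteSpace Z]
    (ι : Z →L[ℝ] Y) (hι : ∀ z : Z, ‖ι z‖ ≤ ‖z‖)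
    (V : ℝ → Y →L[ℝ] Y) (UZ : ℝ → Z →L[ℝ] Z) (UY : ℝ → Y →L[ℝ] Y)
    (B : Y →L[ℝ] Z)
    (MV MZ lamY lamZ : ℝ) (hMV : 0 < MV) (hMZ : 0 < MZ) (hlam : lamY < lamZ)
    -- V is the semigroup generated by A on Y, with decay
    (hV : ∀ t : ℝ, 0 ≤ t → ‖V t‖ ≤ MV * Real.exp (-lamY * t))
    -- U^Z is the semigroup generated by A+B on Z, with decay
    (hUZ : ∀ t : ℝ, 0 ≤ t → ‖UZ t‖ ≤ MZ * Real.exp (-lamZ * t))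
    -- semigroup axioms for U^Y
    (hUYid : UY 0 = ContinuousLinearMap.id ℝ Y)
    (hUYsg : ∀ s t : ℝ, 0 ≤ s → 0 ≤ t → (UY t).comp (UY s) = UY (t + s))
    -- intertwining: U^Y restricted to Z agrees with U^Z
    (hcompat : ∀ t : ℝ, 0 ≤ t → ∀ z : Z, UY t (ι z) = ι (UZ t z))
    -- Duhamel's formula
    (hDuhamel : ∀ t : ℝ, 0 ≤ t → ∀ h : Y,
      UY t h = V t h + ∫ r in (0 : ℝ)..t, UY (t - r) (ι (B (V r h)))) :
    ∀ t : ℝ, 0 ≤ t →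
      ‖UY t‖ ≤ MV * (1 + MZ * ‖B‖ * (lamZ - lamY)⁻¹) * Real.exp (-lamY * t) :=
  semigroup_extension_principle_general ι hι V UZ UY B MV MZ lamY lamZ hlam hV hUZ hcompat hDuhamel
end

section
/- Let η ∈ (0,1), 0 < m < k, and let {S(t)}_{t≥0} be linear operators on X₁ = ℓ¹(Q_i i) satisfying ‖S(t)u‖_{X₁} ≤ M‖u‖_{X₁} and ‖S(t)u‖_{X_η} ≤ M e^{-λ_η t}‖u‖_{X_η} for all t > 0, with M > 0 and λ_η > 0 fixed. Then S(t) maps X_{1+k} = ℓ¹(Q_i i^{1+k}) into X_{1+m}, and there exists C depending only on m, k, M, λ_η such that ‖S(t)u‖_{X_{1+m}} ≤ C(1+t)^{-(k-m)}‖u‖_{X_{1+k}} for all u ∈ X_{1+k} and t ≥ 0. -/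
/-!
Cut `u` at an index `n`: the part of `u` on `1, …, n` and the part beyond `n`, each corrected by a
multiple of the unit mass at `1` so that both have mass zero. For `u ∈ X_{1+k}` the far part is small
in `X₁`, of size `(n+1)^{-k} ‖u‖_{1+k}`, while the near part lies in `X_η` with norm at most
`(e^{ηn} + e^η (n+1)^{-k}) ‖u‖_{1+k}`. On `i ≥ R` the weight `i` is at most `(2/η) e^{-ηR/2} e^{ηi}`,
so the `X₁`-mass of `S(t) u` beyond `R` is at most `M` times the first bound plus
`(2/η) e^{-ηR/2} M e^{-λt}` times the second. With `n ≈ c (R + t)` for a small `c` this is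
`O((R + t)^{-k} ‖u‖_{1+k})`. Summing these tail bounds over the dyadic scales `R = (1 + t) 2^j`
with weights `2^{jm}` bounds `‖S(t) u‖_{1+m}` by `O((1 + t)^{m-k} ‖u‖_{1+k})`.
-/

open Real Finset

theorem rpow_le_mul_exp {a k x : ℝ} (ha : 0 < a) (hk : 0 < k) (hx : 0 ≤ x) :
    x ^ k ≤ (k / a) ^ k * exp (a * x) := by
  have hlin : a * x / k ≤ exp (a * x / k) := by linarith [add_one_le_exp (a * x / k)]
  calc x ^ k = (k / a) ^ k * (a * x / k) ^ k := by
        rw [← mul_rpow (by positivity) (by positivity)]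
        congr 1
        field_simp
    _ ≤ (k / a) ^ k * exp (a * x / k) ^ k := by gcongr
    _ = (k / a) ^ k * exp (a * x) := by
        rw [← exp_mul]
        field_simp

theorem exp_neg_le_mul_rpow_neg {a k x : ℝ} (ha : 0 < a) (hk : 0 < k) (hx : 0 < x) :
    exp (-(a * x)) ≤ (k / a) ^ k * x ^ (-k) := by
  rw [rpow_neg hx.le, exp_neg, ← div_eq_mul_inv, le_div_iff₀ (by positivity), inv_mul_eq_div,
    div_le_iff₀ (exp_pos _)]
  exact rpow_le_mul_exp ha hk hx.le

theorem le_mul_exp_of_le {η R x : ℝ} (hη : 0 < η) (hx : 0 ≤ x) (hRx : R ≤ x) :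
    x ≤ 2 / η * exp (-(η * R / 2)) * exp (η * x) := by
  have h := rpow_le_mul_exp (half_pos hη) one_pos hx
  rw [rpow_one, rpow_one, one_div_div] at h
  calc x ≤ 2 / η * exp (η / 2 * x) := h
    _ ≤ 2 / η * exp (-(η * R / 2) + η * x) := by gcongr; nlinarith
    _ = 2 / η * exp (-(η * R / 2)) * exp (η * x) := by rw [exp_add, mul_assoc]

theorem le_rpow_neg_mul_rpow_one_add {x y k : ℝ} (hy : 0 < y) (hyx : y ≤ x) (hk : 0 ≤ k) :
    x ≤ y ^ (-k) * x ^ (1 + k) := by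
  have hx : 0 < x := hy.trans_le hyx
  have h1 : 1 ≤ y ^ (-k) * x ^ k := by
    rw [rpow_neg hy.le, inv_mul_eq_div, one_le_div (by positivity)]
    exact rpow_le_rpow hy.le hyx hk
  calc x = x * 1 := (mul_one x).symm
    _ ≤ x * (y ^ (-k) * x ^ k) := by gcongr
    _ = y ^ (-k) * x ^ (1 + k) := by rw [rpow_add hx, rpow_one]; ring

theorem exp_mul_le_exp_mul_mul_rpow {η x y k : ℝ} (hη : 0 ≤ η) (hx : 1 ≤ x) (hxy : x ≤ y)
    (hk : 0 ≤ k) : exp (η * x) ≤ exp (η * y) * x ^ (1 + k) := by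
  calc exp (η * x) ≤ exp (η * y) * 1 := by rw [mul_one]; gcongr
    _ ≤ exp (η * y) * x ^ (1 + k) := by gcongr; exact one_le_rpow hx (by linarith)

section Dyadic

variable {m P : ℝ}

theorem exists_mul_two_pow_le_and_rpow_le (hm : 0 ≤ m) (hP : 0 < P) {x : ℝ} (hx : P ≤ x) :
    ∃ J : ℕ, P * 2 ^ J ≤ x ∧ x ^ m ≤ (2 * P) ^ m * ((2 : ℝ) ^ J) ^ m := by
  obtain ⟨J, hJ, hJ'⟩ := exists_nat_pow_near ((one_le_div hP).2 hx) one_lt_two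
  refine ⟨J, by rwa [le_div_iff₀' hP] at hJ, ?_⟩
  rw [div_lt_iff₀' hP] at hJ'
  calc x ^ m ≤ (P * 2 ^ (J + 1)) ^ m := rpow_le_rpow (by linarith) hJ'.le hm
    _ = (2 * P) ^ m * ((2 : ℝ) ^ J) ^ m := by
        rw [← mul_rpow (by positivity) (by positivity), pow_succ]
        ring_nf

theorem rpow_mul_le_add_tsum_dyadic (hm : 0 ≤ m) (hP : 0 < P) {x b : ℝ} (hx : 0 ≤ x)
    (hb : 0 ≤ b)
    (hsum : Summable fun j : ℕ => ((2 : ℝ) ^ j) ^ m * if P * 2 ^ j ≤ x then b else 0) :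
    x ^ m * b ≤ P ^ m * b + (2 * P) ^ m * ∑' j : ℕ, ((2 : ℝ) ^ j) ^ m *
      if P * 2 ^ j ≤ x then b else 0 := by
  rcases lt_or_ge x P with h | h
  · calc x ^ m * b ≤ P ^ m * b := by gcongr
      _ ≤ _ := le_add_of_nonneg_right <| mul_nonneg (by positivity) <|
          tsum_nonneg fun j => mul_nonneg (by positivity) (by split_ifs <;> simp [hb])
  obtain ⟨J, hJ, hJm⟩ := exists_mul_two_pow_le_and_rpow_le hm hP h
  calc x ^ m * b ≤ (2 * P) ^ m * (((2 : ℝ) ^ J) ^ m * if P * 2 ^ J ≤ x then b else 0) := by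
        rw [if_pos hJ, ← mul_assoc]; gcongr
    _ ≤ (2 * P) ^ m * ∑' j : ℕ, ((2 : ℝ) ^ j) ^ m * if P * 2 ^ j ≤ x then b else 0 := by
        gcongr
        exact hsum.le_tsum J fun j _ => mul_nonneg (by positivity) (by split_ifs <;> simp [hb])
    _ ≤ _ := le_add_of_nonneg_left (mul_nonneg (by positivity) hb)

theorem two_pow_rpow_mul_tail_le {a : ℕ → ℝ} {k B : ℝ} (hP : 0 < P)
    (htail : ∀ R, P ≤ R → ∑' i : ℕ, (if R ≤ (i : ℝ) then a i else 0) ≤ B * R ^ (-k)) (j : ℕ) :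
    ((2 : ℝ) ^ j) ^ m * ∑' i : ℕ, (if P * 2 ^ j ≤ (i : ℝ) then a i else 0) ≤
      B * P ^ (-k) * ((2 : ℝ) ^ (m - k)) ^ j := by
  calc ((2 : ℝ) ^ j) ^ m * ∑' i : ℕ, (if P * 2 ^ j ≤ (i : ℝ) then a i else 0)
      ≤ ((2 : ℝ) ^ j) ^ m * (B * (P * 2 ^ j) ^ (-k)) := by
        gcongr; exact htail _ (le_mul_of_one_le_right hP.le (one_le_pow₀ one_le_two))
    _ = B * P ^ (-k) * ((2 : ℝ) ^ (m - k)) ^ j := by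
        rw [mul_rpow hP.le (by positivity), rpow_pow_comm (by norm_num : (0 : ℝ) ≤ 2),
          sub_eq_add_neg, rpow_add (by positivity)]
        ring

/-- The discrete form of `∫ x^m dμ = m ∫ R^{m-1} μ([R, ∞)) dR`. -/
theorem summable_rpow_mul_and_tsum_le_of_tail_le {a : ℕ → ℝ} (ha : ∀ i, 0 ≤ a i)
    (hs : Summable a) {k B : ℝ} (hm : 0 ≤ m) (hmk : m < k) (hP : 0 < P)
    (htot : ∑' i, a i ≤ B * P ^ (-k))
    (htail : ∀ R, P ≤ R → ∑' i : ℕ, (if R ≤ (i : ℝ) then a i else 0) ≤ B * R ^ (-k)) :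
    Summable (fun i : ℕ => (i : ℝ) ^ m * a i) ∧
      ∑' i : ℕ, (i : ℝ) ^ m * a i ≤ (1 + 2 ^ m / (1 - 2 ^ (m - k))) * B * P ^ (m - k) := by
  set ρ : ℝ := 2 ^ (m - k)
  have hρ0 : 0 ≤ ρ := by positivity
  have hρ1 : ρ < 1 := rpow_lt_one_of_one_lt_of_neg one_lt_two (by linarith)
  have hgeom := (summable_geometric_of_lt_one hρ0 hρ1).mul_left (B * P ^ (-k))
  set F : ℕ → ℕ → ℝ := fun j i => ((2 : ℝ) ^ j) ^ m * if P * 2 ^ j ≤ (i : ℝ) then a i else 0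
  have hF0 : ∀ j i, 0 ≤ F j i := fun j i =>
    mul_nonneg (by positivity) (by split_ifs <;> simp [ha i])
  have hFs : ∀ j, Summable (F j) := fun j =>
    (hs.mul_left (((2 : ℝ) ^ j) ^ m)).of_nonneg_of_le (hF0 j) fun i => by
      simp only [F]; gcongr; split_ifs <;> simp [ha i]
  have hrow : ∀ j, ∑' i, F j i ≤ B * P ^ (-k) * ρ ^ j := fun j => by
    rw [tsum_mul_left]; exact two_pow_rpow_mul_tail_le hP htail j
  have hcol : ∀ i, Summable (fun j => F j i) := fun i =>
    hgeom.of_nonneg_of_le (hF0 · i) fun j =>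
      ((hFs j).le_tsum i fun _ _ => hF0 _ _).trans (hrow j)
  have hfin : ∀ s : Finset ℕ, ∑ i ∈ s, (i : ℝ) ^ m * a i ≤
      (1 + 2 ^ m / (1 - ρ)) * B * P ^ (m - k) := by
    intro s
    calc ∑ i ∈ s, (i : ℝ) ^ m * a i
        ≤ ∑ i ∈ s, (P ^ m * a i + (2 * P) ^ m * ∑' j, F j i) :=
          sum_le_sum fun i _ => rpow_mul_le_add_tsum_dyadic hm hP i.cast_nonneg (ha i) (hcol i)
      _ = P ^ m * ∑ i ∈ s, a i + (2 * P) ^ m * ∑' j, ∑ i ∈ s, F j i := by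
          rw [sum_add_distrib, ← mul_sum, ← mul_sum, Summable.tsum_finsetSum fun i _ => hcol i]
      _ ≤ P ^ m * (B * P ^ (-k)) + (2 * P) ^ m * ∑' j, B * P ^ (-k) * ρ ^ j := by
          gcongr
          · exact (hs.sum_le_tsum s fun i _ => ha i).trans htot
          · exact summable_sum fun i _ => hcol i
          · exact ((hFs _).sum_le_tsum s fun i _ => hF0 _ i).trans (hrow _)
      _ = (1 + 2 ^ m / (1 - ρ)) * B * P ^ (m - k) := by
          rw [tsum_mul_left, tsum_geometric_of_lt_one hρ0 hρ1, mul_rpow (by norm_num) hP.le,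
            sub_eq_add_neg m, rpow_add hP]
          ring
  exact ⟨summable_of_sum_le (fun i => mul_nonneg (by positivity) (ha i)) hfin,
    tsum_le_of_sum_le (fun i => mul_nonneg (by positivity) (ha i)) hfin⟩

end Dyadic

/-- For `ω i = Q i * i` and `ω i = Q i * exp (η i)` the mass-zero parts of `ℓ¹(ω)` are the spaces
`X₁` and `X_η`. -/
def BoundedOnMassZero (Q ω : ℕ → ℝ) (C : ℝ) (T : (ℕ → ℝ) → ℕ → ℝ) : Prop :=
  ∀ u : ℕ → ℝ, Summable (fun i => ω i * |u i|) → ∑' i : ℕ, Q i * (i : ℝ) * u i = 0 →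
    Summable (fun i => ω i * |T u i|) ∧ ∑' i, ω i * |T u i| ≤ C * ∑' i, ω i * |u i|

section Weights

variable {Q : ℕ → ℝ} (hQ : ∀ i, 1 ≤ i → 0 < Q i)
include hQ

theorem mul_nonneg_of_map_zero {g : ℕ → ℝ} (hg : ∀ i, 0 ≤ g i) (hg0 : g 0 = 0) (i : ℕ) :
    0 ≤ Q i * g i := by
  rcases Nat.eq_zero_or_pos i with rfl | hi
  · simp [hg0]
  · exact mul_nonneg (hQ i hi).le (hg i)

theorem mul_natCast_nonneg (i : ℕ) : 0 ≤ Q i * i :=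
  mul_nonneg_of_map_zero hQ (g := Nat.cast) Nat.cast_nonneg Nat.cast_zero i

theorem mul_natCast_rpow_nonneg {k : ℝ} (hk : 0 ≤ k) (i : ℕ) : 0 ≤ Q i * (i : ℝ) ^ (1 + k) :=
  mul_nonneg_of_map_zero hQ (g := fun i : ℕ => (i : ℝ) ^ (1 + k)) (fun _ => by positivity)
    (by simp [zero_rpow (by linarith : 1 + k ≠ 0)]) i

theorem summable_mul_of_summable_mul_abs {x : ℕ → ℝ} (hx : Summable fun i => Q i * i * |x i|) :
    Summable fun i => Q i * i * x i :=
  Summable.of_abs <| hx.congr fun i => by rw [abs_mul, abs_of_nonneg (mul_natCast_nonneg hQ i)]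

theorem summable_mul_abs_of_summable_rpow {k : ℝ} (hk : 0 ≤ k) {x : ℕ → ℝ}
    (hx : Summable fun i => Q i * (i : ℝ) ^ (1 + k) * |x i|) :
    Summable fun i => Q i * i * |x i| := by
  refine hx.of_nonneg_of_le (fun i => mul_nonneg (mul_natCast_nonneg hQ i) (abs_nonneg _))
    fun i => ?_
  rcases Nat.eq_zero_or_pos i with rfl | hi
  · simpa using mul_nonneg (mul_natCast_rpow_nonneg hQ hk 0) (abs_nonneg (x 0))
  have hi1 : (1 : ℝ) ≤ i := by exact_mod_cast hi
  have : (i : ℝ) ≤ (i : ℝ) ^ (1 + k) := by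
    simpa using rpow_le_rpow_of_exponent_le hi1 (by linarith : (1 : ℝ) ≤ 1 + k)
  gcongr
  exact (hQ i hi).le

end Weights

namespace BoundedOnMassZero

variable {Q ω : ℕ → ℝ} {M C : ℝ} {T : (ℕ → ℝ) → ℕ → ℝ}

/-- The unit mass at `0` has norm zero in `ℓ¹(Q i i)`. -/
theorem apply_single_zero_of_ne_zero (hQ : ∀ i, 1 ≤ i → 0 < Q i)
    (hT : BoundedOnMassZero Q (fun i => Q i * i) M T) {i : ℕ} (hi : i ≠ 0) :
    T (Pi.single 0 1) i = 0 := by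
  have hzero : (fun j : ℕ => Q j * j * |(Pi.single 0 1 : ℕ → ℝ) j|) = 0 := funext fun j => by
    rcases eq_or_ne j 0 with rfl | hj <;> simp [*]
  have hmass : (fun j : ℕ => Q j * j * (Pi.single 0 1 : ℕ → ℝ) j) = 0 := funext fun j => by
    rcases eq_or_ne j 0 with rfl | hj <;> simp [*]
  obtain ⟨hs, hle⟩ := hT _ (by rw [hzero]; exact summable_zero) (by rw [hmass]; exact tsum_zero)
  have hi0 : Q i * i * |T (Pi.single 0 1) i| ≤ 0 := by
    refine (hs.le_tsum i fun j _ => mul_nonneg (mul_natCast_nonneg hQ j) (abs_nonneg _)).trans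
      (hle.trans ?_)
    rw [hzero, Pi.zero_def, tsum_zero, mul_zero]
  have hQi : 0 < Q i * i := mul_pos (hQ i (Nat.one_le_iff_ne_zero.2 hi)) (by positivity)
  exact abs_nonpos_iff.1 (nonpos_of_mul_nonpos_right hi0 hQi)

variable (hlin : IsLinearMap ℝ T) (hT : BoundedOnMassZero Q ω C T)
  (hsupp : ∀ i, i ≠ 0 → T (Pi.single 0 1) i = 0) {v : ℕ → ℝ} (hv0 : v 0 = 0)
  (hvs : Summable fun i => ω i * |v i|) (hvm : ∑' i : ℕ, Q i * i * v i = 0)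
include hlin hT hsupp hv0 hvs hvm

/-- Apply the bound to `v + c • Pi.single 0 1`, whose image differs from `T v` only at `0`. -/
theorem summable_and_tsum_ite_add_le (c : ℝ) :
    Summable (fun i => if i = 0 then 0 else ω i * |T v i|) ∧
      (∑' i, if i = 0 then 0 else ω i * |T v i|) + ω 0 * |T v 0 + c * T (Pi.single 0 1) 0|
        ≤ C * (ω 0 * |c| + ∑' i, ω i * |v i|) := by
  set v' := Function.update v 0 c
  have hTv' : ∀ i, T v' i = T v i + c * T (Pi.single 0 1) i := fun i => by
    have hv' : v' = v + c • Pi.single 0 1 := by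
      ext j; rcases eq_or_ne j 0 with rfl | hj <;> simp [v', *]
    rw [hv', hlin.map_add, hlin.map_smul]; rfl
  have hv'ω : (fun i => ω i * |v' i|) = Function.update (fun i => ω i * |v i|) 0 (ω 0 * |c|) := by
    ext i; rcases eq_or_ne i 0 with rfl | hi <;> simp [v', *]
  have hv'm : ∑' i : ℕ, Q i * i * v' i = 0 := by
    rw [← hvm]; congr 1; ext i; rcases eq_or_ne i 0 with rfl | hi <;> simp [v', *]
  obtain ⟨hs, hle⟩ := hT v' (hv'ω ▸ hvs.update 0 _) hv'm
  have hite : (fun i => if i = 0 then 0 else ω i * |T v i|) =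
      Function.update (fun i => ω i * |T v' i|) 0 0 := by
    ext i; rcases eq_or_ne i 0 with rfl | hi <;> simp [*]
  refine ⟨hite ▸ hs.update 0 0, ?_⟩
  have hsplit : ∑' i, ω i * |v' i| = ω 0 * |c| + ∑' i, ω i * |v i| := by
    rw [hv'ω, (hvs.hasSum.update 0 _).tsum_eq, hv0, abs_zero, mul_zero, sub_zero]
  rw [hite, (hs.hasSum.update 0 0).tsum_eq, ← hTv', ← hsplit]
  linarith

/-- The bound survives on the indices `i ≠ 0` even when `ω 0 < 0`: then `T` does not annihilate
the unit mass at `0`, and a multiple of it added to `v` cancels `T v 0`. -/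
theorem summable_and_tsum_ite_le (hC : 0 < C) :
    Summable (fun i => if i = 0 then 0 else ω i * |T v i|) ∧
      ∑' i, (if i = 0 then 0 else ω i * |T v i|) ≤ C * ∑' i, ω i * |v i| := by
  have key := summable_and_tsum_ite_add_le hlin hT hsupp hv0 hvs hvm
  refine ⟨(key 0).1, ?_⟩
  rcases le_or_gt 0 (ω 0) with hω0 | hω0
  · have := (key 0).2
    simp only [zero_mul, add_zero, abs_zero, mul_zero, zero_add] at this
    exact le_trans (le_add_of_nonneg_right (mul_nonneg hω0 (abs_nonneg _))) this
  set a := T (Pi.single 0 1) 0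
  have ha : C ≤ |a| := by
    have := (summable_and_tsum_ite_add_le hlin hT hsupp (v := 0) rfl (by simp) (by simp) 1).2
    simp only [hlin.map_zero, Pi.zero_apply, abs_zero, mul_zero, ite_self, tsum_zero,
      zero_add, one_mul, abs_one, add_zero] at this
    nlinarith
  have := (key (-T v 0 / a)).2
  rw [div_mul_cancel₀ _ (abs_pos.1 (hC.trans_le ha)), add_neg_cancel, abs_zero, mul_zero,
    add_zero, mul_add] at this
  nlinarith [mul_nonpos_of_nonneg_of_nonpos hC.le
    (mul_nonpos_of_nonpos_of_nonneg hω0.le (abs_nonneg (-T v 0 / a)))]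

end BoundedOnMassZero

section Splitting

variable {Q : ℕ → ℝ} {k : ℝ} {u : ℕ → ℝ}

def tailPart (n : ℕ) (u : ℕ → ℝ) : ℕ → ℝ := fun i => if i ∈ Icc 1 n then 0 else u i

noncomputable def tailMass (Q : ℕ → ℝ) (n : ℕ) (u : ℕ → ℝ) : ℝ :=
  ∑' i, Q i * i * tailPart n u i

/-- Subtracting it from `u` leaves a sequence of mass zero supported in `1, …, n`. -/
noncomputable def balancedTail (Q : ℕ → ℝ) (n : ℕ) (u : ℕ → ℝ) : ℕ → ℝ :=
  tailPart n u - Pi.single 1 (tailMass Q n u / Q 1)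

theorem sub_balancedTail_apply (n i : ℕ) :
    (u - balancedTail Q n u) i =
      (if i ∈ Icc 1 n then u i else 0) + (Pi.single 1 (tailMass Q n u / Q 1) : ℕ → ℝ) i := by
  simp only [balancedTail, tailPart, Pi.sub_apply]
  split_ifs <;> ring

theorem sub_balancedTail_apply_zero (n : ℕ) : (u - balancedTail Q n u) 0 = 0 := by
  rw [sub_balancedTail_apply]; simp

theorem mul_mul_abs_single_tailMass_div (hQ : ∀ i, 1 ≤ i → 0 < Q i) (w : ℕ → ℝ) (n i : ℕ) :
    Q i * w i * |(Pi.single 1 (tailMass Q n u / Q 1) : ℕ → ℝ) i| =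
      (Pi.single 1 (w 1 * |tailMass Q n u|) : ℕ → ℝ) i := by
  rcases eq_or_ne i 1 with rfl | hi
  · have hQ1 := hQ 1 le_rfl
    simp only [Pi.single_eq_same, abs_div, abs_of_pos hQ1]
    field_simp
  · simp [hi]

theorem mul_exp_mul_abs_ite_le (hQ : ∀ i, 1 ≤ i → 0 < Q i) (hk : 0 ≤ k) {η : ℝ} (hη : 0 ≤ η)
    (n i : ℕ) :
    Q i * exp (η * i) * |if i ∈ Icc 1 n then u i else 0| ≤
      exp (η * n) * (Q i * (i : ℝ) ^ (1 + k) * |u i|) := by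
  split_ifs with hin
  · obtain ⟨hi, hin⟩ := mem_Icc.1 hin
    have hi1 : (1 : ℝ) ≤ i := by exact_mod_cast hi
    calc Q i * exp (η * i) * |u i| = (Q i * |u i|) * exp (η * i) := by ring
      _ ≤ (Q i * |u i|) * (exp (η * n) * (i : ℝ) ^ (1 + k)) := by
          gcongr
          · exact mul_nonneg (hQ i hi).le (abs_nonneg _)
          · exact exp_mul_le_exp_mul_mul_rpow hη hi1 (by exact_mod_cast hin) hk
      _ = _ := by ring
  · simpa using mul_nonneg (exp_pos _).le
      (mul_nonneg (mul_natCast_rpow_nonneg hQ hk i) (abs_nonneg _))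

variable (hQ : ∀ i, 1 ≤ i → 0 < Q i) (hk : 0 ≤ k)
  (hu : Summable fun i => Q i * (i : ℝ) ^ (1 + k) * |u i|)
include hQ hk hu

theorem summable_and_tsum_tailPart_le (n : ℕ) :
    Summable (fun i => Q i * i * |tailPart n u i|) ∧
      ∑' i, Q i * i * |tailPart n u i| ≤
        ((n : ℝ) + 1) ^ (-k) * ∑' i, Q i * (i : ℝ) ^ (1 + k) * |u i| := by
  have hnn : ∀ i, 0 ≤ Q i * i * |tailPart n u i| := fun i =>
    mul_nonneg (mul_natCast_nonneg hQ i) (abs_nonneg _)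
  have hle : ∀ i, Q i * i * |tailPart n u i| ≤
      ((n : ℝ) + 1) ^ (-k) * (Q i * (i : ℝ) ^ (1 + k) * |u i|) := by
    intro i
    have hU : 0 ≤ ((n : ℝ) + 1) ^ (-k) * (Q i * (i : ℝ) ^ (1 + k) * |u i|) :=
      mul_nonneg (by positivity) (mul_nonneg (mul_natCast_rpow_nonneg hQ hk i) (abs_nonneg _))
    rcases Nat.eq_zero_or_pos i with rfl | hi
    · simpa using hU
    by_cases hin : i ∈ Icc 1 n
    · simpa [tailPart, hin] using hU
    have hni : (n : ℝ) + 1 ≤ i := by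
      simp only [mem_Icc, not_and, not_le] at hin; exact_mod_cast hin hi
    calc Q i * i * |tailPart n u i| = (Q i * |u i|) * i := by simp [tailPart, hin]; ring
      _ ≤ (Q i * |u i|) * (((n : ℝ) + 1) ^ (-k) * (i : ℝ) ^ (1 + k)) := by
          gcongr
          · exact mul_nonneg (hQ i hi).le (abs_nonneg _)
          · exact le_rpow_neg_mul_rpow_one_add (by positivity) hni hk
      _ = _ := by ring
  have hs := (hu.mul_left _).of_nonneg_of_le hnn hle
  exact ⟨hs, (Summable.tsum_le_tsum hle hs (hu.mul_left _)).trans_eq tsum_mul_left⟩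

theorem abs_tailMass_le (n : ℕ) :
    |tailMass Q n u| ≤ ((n : ℝ) + 1) ^ (-k) * ∑' i, Q i * (i : ℝ) ^ (1 + k) * |u i| := by
  obtain ⟨hs, hle⟩ := summable_and_tsum_tailPart_le hQ hk hu n
  have habs : ∀ i, ‖Q i * i * tailPart n u i‖ = Q i * i * |tailPart n u i| := fun i => by
    rw [Real.norm_eq_abs, abs_mul, abs_of_nonneg (mul_natCast_nonneg hQ i)]
  have := norm_tsum_le_tsum_norm (hs.congr fun i => (habs i).symm)
  simp only [habs, Real.norm_eq_abs] at this
  exact this.trans hle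

theorem tsum_mul_balancedTail (n : ℕ) : ∑' i, Q i * i * balancedTail Q n u i = 0 := by
  have hsingle : ∑' i, Q i * i * (Pi.single 1 (tailMass Q n u / Q 1) : ℕ → ℝ) i =
      tailMass Q n u := by
    rw [tsum_eq_single 1 fun j hj => by simp [hj]]
    simp [mul_div_cancel₀ _ (hQ 1 le_rfl).ne']
  simp only [balancedTail, Pi.sub_apply, mul_sub]
  rw [(summable_mul_of_summable_mul_abs hQ (summable_and_tsum_tailPart_le hQ hk hu n).1).tsum_sub
    (summable_of_ne_finset_zero (s := {1}) fun j hj => by simp_all), hsingle, tailMass, sub_self]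

theorem summable_and_tsum_balancedTail_le (n : ℕ) :
    Summable (fun i => Q i * i * |balancedTail Q n u i|) ∧
      ∑' i, Q i * i * |balancedTail Q n u i| ≤
        2 * (((n : ℝ) + 1) ^ (-k) * ∑' i, Q i * (i : ℝ) ^ (1 + k) * |u i|) := by
  obtain ⟨hs, hle⟩ := summable_and_tsum_tailPart_le hQ hk hu n
  have hpt : ∀ i, Q i * i * |balancedTail Q n u i| ≤
      Q i * i * |tailPart n u i| + (Pi.single 1 |tailMass Q n u| : ℕ → ℝ) i := fun i => by
    have := mul_mul_abs_single_tailMass_div (u := u) hQ Nat.cast n i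
    rw [Nat.cast_one, one_mul] at this
    rw [← this, ← mul_add]
    exact mul_le_mul_of_nonneg_left (abs_sub _ _) (mul_natCast_nonneg hQ i)
  have hs' := hs.add (hasSum_pi_single 1 |tailMass Q n u|).summable
  have hbs := hs'.of_nonneg_of_le (fun i => mul_nonneg (mul_natCast_nonneg hQ i)
    (abs_nonneg _)) hpt
  refine ⟨hbs, ?_⟩
  calc ∑' i, Q i * i * |balancedTail Q n u i|
      ≤ ∑' i, (Q i * i * |tailPart n u i| + (Pi.single 1 |tailMass Q n u| : ℕ → ℝ) i) :=
        Summable.tsum_le_tsum hpt hbs hs'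
    _ = ∑' i, Q i * i * |tailPart n u i| + |tailMass Q n u| := by
        rw [hs.tsum_add (hasSum_pi_single 1 _).summable, tsum_pi_single]
    _ ≤ _ := by linarith [abs_tailMass_le hQ hk hu n]

theorem summable_and_tsum_exp_sub_balancedTail_le {η : ℝ} (hη : 0 ≤ η) (n : ℕ) :
    Summable (fun i => Q i * exp (η * i) * |(u - balancedTail Q n u) i|) ∧
      ∑' i, Q i * exp (η * i) * |(u - balancedTail Q n u) i| ≤
        (exp (η * n) + exp η * ((n : ℝ) + 1) ^ (-k)) * ∑' i, Q i * (i : ℝ) ^ (1 + k) * |u i| := by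
  set U := ∑' i, Q i * (i : ℝ) ^ (1 + k) * |u i|
  have hnn : ∀ i, 0 ≤ Q i * exp (η * i) * |(u - balancedTail Q n u) i| := fun i => by
    rcases Nat.eq_zero_or_pos i with rfl | hi
    · rw [sub_balancedTail_apply_zero]; simp
    · exact mul_nonneg (mul_nonneg (hQ i hi).le (exp_pos _).le) (abs_nonneg _)
  have hpt : ∀ i, Q i * exp (η * i) * |(u - balancedTail Q n u) i| ≤
      exp (η * n) * (Q i * (i : ℝ) ^ (1 + k) * |u i|) +
        (Pi.single 1 (exp (η * (1 : ℕ)) * |tailMass Q n u|) : ℕ → ℝ) i := fun i => by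
    rcases Nat.eq_zero_or_pos i with rfl | hi
    · rw [sub_balancedTail_apply_zero, abs_zero, mul_zero]
      exact add_nonneg (mul_nonneg (exp_pos _).le
        (mul_nonneg (mul_natCast_rpow_nonneg hQ hk 0) (abs_nonneg _))) (by simp)
    rw [sub_balancedTail_apply, ← mul_mul_abs_single_tailMass_div hQ (fun i => exp (η * i))]
    exact (mul_le_mul_of_nonneg_left (abs_add_le _ _)
      (mul_nonneg (hQ i hi).le (exp_pos _).le)).trans
        (by rw [mul_add]; exact add_le_add (mul_exp_mul_abs_ite_le hQ hk hη n i) le_rfl)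
  have hsingle := (hasSum_pi_single 1 (exp (η * (1 : ℕ)) * |tailMass Q n u|)).summable
  have hrhs := (hu.mul_left (exp (η * n))).add hsingle
  refine ⟨hrhs.of_nonneg_of_le hnn hpt,
    (Summable.tsum_le_tsum hpt (hrhs.of_nonneg_of_le hnn hpt) hrhs).trans ?_⟩
  rw [(hu.mul_left _).tsum_add hsingle, tsum_mul_left, tsum_pi_single, Nat.cast_one, mul_one]
  have : exp η * |tailMass Q n u| ≤ exp η * (((n : ℝ) + 1) ^ (-k) * U) :=
    mul_le_mul_of_nonneg_left (abs_tailMass_le hQ hk hu n) (exp_pos η).le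
  linarith

end Splitting

section Tail

variable {Q : ℕ → ℝ} {η k M C : ℝ} {T : (ℕ → ℝ) → ℕ → ℝ} {u : ℕ → ℝ}

theorem ite_mul_abs_add_le (hQ : ∀ i, 1 ≤ i → 0 < Q i) (hη : 0 < η) (R : ℝ) (x y : ℕ → ℝ)
    (i : ℕ) :
    (if R ≤ (i : ℝ) then Q i * i * |x i + y i| else 0) ≤
      2 / η * exp (-(η * R / 2)) * (if i = 0 then 0 else Q i * exp (η * i) * |x i|) +
        Q i * i * |y i| := by
  rcases Nat.eq_zero_or_pos i with rfl | hi
  · simp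
  have hy : 0 ≤ Q i * i * |y i| := mul_nonneg (mul_natCast_nonneg hQ i) (abs_nonneg _)
  rw [if_neg hi.ne']
  split_ifs with hR
  · calc Q i * i * |x i + y i| ≤ Q i * i * (|x i| + |y i|) := by
          gcongr; exacts [mul_natCast_nonneg hQ i, abs_add_le _ _]
      _ = (Q i * |x i|) * i + Q i * i * |y i| := by ring
      _ ≤ (Q i * |x i|) * (2 / η * exp (-(η * R / 2)) * exp (η * i)) + Q i * i * |y i| := by
          gcongr
          · exact mul_nonneg (hQ i hi).le (abs_nonneg _)
          · exact le_mul_exp_of_le hη i.cast_nonneg hR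
      _ = _ := by ring
  · exact add_nonneg (mul_nonneg (by positivity)
      (mul_nonneg (mul_nonneg (hQ i hi).le (exp_pos _).le) (abs_nonneg _))) hy

theorem tsum_tail_le (hQ : ∀ i, 1 ≤ i → 0 < Q i) (hη : 0 < η) (hk : 0 ≤ k) (hM : 0 ≤ M)
    (hC : 0 < C) (hlin : IsLinearMap ℝ T) (h1 : BoundedOnMassZero Q (fun i => Q i * i) M T)
    (hT : BoundedOnMassZero Q (fun i => Q i * exp (η * i)) C T)
    (hu : Summable fun i => Q i * (i : ℝ) ^ (1 + k) * |u i|)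
    (hmass : ∑' i : ℕ, Q i * i * u i = 0) (n : ℕ) (R : ℝ) :
    ∑' i : ℕ, (if R ≤ (i : ℝ) then Q i * i * |T u i| else 0) ≤
      (2 * M * ((n : ℝ) + 1) ^ (-k) +
        2 / η * exp (-(η * R / 2)) * C * (exp (η * n) + exp η * ((n : ℝ) + 1) ^ (-k))) *
          ∑' i, Q i * (i : ℝ) ^ (1 + k) * |u i| := by
  set U := ∑' i, Q i * (i : ℝ) ^ (1 + k) * |u i|
  set w := balancedTail Q n u
  obtain ⟨hws, hwb⟩ := summable_and_tsum_balancedTail_le hQ hk hu n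
  obtain ⟨hvs, hvb⟩ := summable_and_tsum_exp_sub_balancedTail_le hQ hk hu hη.le n
  have hwm := tsum_mul_balancedTail hQ hk hu n
  have hvm : ∑' i : ℕ, Q i * i * (u - w) i = 0 := by
    simp only [Pi.sub_apply, mul_sub]
    rw [(summable_mul_of_summable_mul_abs hQ (summable_mul_abs_of_summable_rpow hQ hk hu)).tsum_sub
      (summable_mul_of_summable_mul_abs hQ hws), hmass, hwm, sub_zero]
  obtain ⟨hTws, hTwb⟩ := h1 w hws hwm
  obtain ⟨hTvs, hTvb⟩ := hT.summable_and_tsum_ite_le hlin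
    (fun _ => h1.apply_single_zero_of_ne_zero hQ) (sub_balancedTail_apply_zero n) hvs hvm hC
  have hTu : T u = T (u - w) + T w := by rw [← hlin.map_add, sub_add_cancel]
  set E := 2 / η * exp (-(η * R / 2))
  have hrhs := (hTvs.mul_left E).add hTws
  have hlhs : Summable fun i : ℕ => if R ≤ (i : ℝ) then Q i * i * |T u i| else 0 :=
    hrhs.of_nonneg_of_le (fun i => by
      split_ifs
      exacts [mul_nonneg (mul_natCast_nonneg hQ i) (abs_nonneg _), le_rfl])
      fun i => by rw [hTu]; exact ite_mul_abs_add_le hQ hη R _ _ i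
  calc ∑' i : ℕ, (if R ≤ (i : ℝ) then Q i * i * |T u i| else 0)
      ≤ ∑' i, (E * (if i = 0 then 0 else Q i * exp (η * i) * |T (u - w) i|) +
          Q i * i * |T w i|) :=
        Summable.tsum_le_tsum (fun i => by rw [hTu]; exact ite_mul_abs_add_le hQ hη R _ _ i)
          hlhs hrhs
    _ = E * ∑' i, (if i = 0 then 0 else Q i * exp (η * i) * |T (u - w) i|) +
          ∑' i, Q i * i * |T w i| := by
        rw [(hTvs.mul_left E).tsum_add hTws, tsum_mul_left]
    _ ≤ E * (C * ((exp (η * n) + exp η * ((n : ℝ) + 1) ^ (-k)) * U)) +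
          M * (2 * (((n : ℝ) + 1) ^ (-k) * U)) := by
        gcongr
        exacts [hTvb.trans (mul_le_mul_of_nonneg_left hvb hC.le),
          hTwb.trans (mul_le_mul_of_nonneg_left hwb hM)]
    _ = _ := by ring

theorem tsum_tail_le_rpow {lam t : ℝ} (hQ : ∀ i, 1 ≤ i → 0 < Q i) (hη : 0 < η) (hk : 0 < k)
    (hM : 0 < M) (hlam : 0 < lam) (ht : 0 ≤ t) (hlin : IsLinearMap ℝ T)
    (h1 : BoundedOnMassZero Q (fun i => Q i * i) M T)
    (hT : BoundedOnMassZero Q (fun i => Q i * exp (η * i)) (M * exp (-lam * t)) T)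
    (hu : Summable fun i => Q i * (i : ℝ) ^ (1 + k) * |u i|)
    (hmass : ∑' i : ℕ, Q i * i * u i = 0) {R : ℝ} (hR : 0 ≤ R) (hRt : 0 < R + t) :
    ∑' i : ℕ, (if R ≤ (i : ℝ) then Q i * i * |T u i| else 0) ≤
      (2 * M + 2 * M / η * ((k / η) ^ k + exp η)) *
        (min (1 / 4) (lam / (2 * η)) * (R + t)) ^ (-k) * ∑' i, Q i * (i : ℝ) ^ (1 + k) * |u i| := by
  set c := min (1 / 4) (lam / (2 * η))
  set N := c * (R + t)
  set n := ⌊N⌋₊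
  have hN : 0 < N := mul_pos (lt_min (by norm_num) (by positivity)) hRt
  have hn1 : ((n : ℝ) + 1) ^ (-k) ≤ N ^ (-k) :=
    rpow_le_rpow_of_nonpos hN (Nat.lt_floor_add_one N).le (by linarith)
  have hdecay : exp (-(η * R / 2)) * exp (-lam * t) ≤ 1 := by
    rw [← exp_add]; exact exp_le_one_iff.2 (by nlinarith)
  -- `c ≤ 1 / 4` and `c ≤ lam / (2 η)` give `η n ≤ η R / 2 + lam t - η N`
  have hgrowth : exp (-(η * R / 2)) * exp (-lam * t) * exp (η * n) ≤ (k / η) ^ k * N ^ (-k) := by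
    refine le_trans ?_ (exp_neg_le_mul_rpow_neg hη hk hN)
    rw [← exp_add, ← exp_add, exp_le_exp]
    have hc1 : c * R ≤ R / 4 := by nlinarith [min_le_left (1 / 4 : ℝ) (lam / (2 * η))]
    have hc2 : 2 * η * c ≤ lam := by
      have := min_le_right (1 / 4 : ℝ) (lam / (2 * η))
      rwa [le_div_iff₀ (by positivity), mul_comm] at this
    have hn : η * n ≤ η * N := mul_le_mul_of_nonneg_left (Nat.floor_le hN.le) hη.le
    nlinarith [mul_le_mul_of_nonneg_left hc1 hη.le, mul_le_mul_of_nonneg_right hc2 ht]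
  refine (tsum_tail_le hQ hη hk.le hM.le (by positivity) hlin h1 hT hu hmass n R).trans
    (mul_le_mul_of_nonneg_right ?_ (tsum_nonneg fun i =>
      mul_nonneg (mul_natCast_rpow_nonneg hQ hk.le i) (abs_nonneg _)))
  calc 2 * M * ((n : ℝ) + 1) ^ (-k) + 2 / η * exp (-(η * R / 2)) * (M * exp (-lam * t)) *
        (exp (η * n) + exp η * ((n : ℝ) + 1) ^ (-k))
      = 2 * M * ((n : ℝ) + 1) ^ (-k) +
          2 * M / η * (exp (-(η * R / 2)) * exp (-lam * t) * exp (η * n)) +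
          2 * M / η * exp η * (exp (-(η * R / 2)) * exp (-lam * t) * ((n : ℝ) + 1) ^ (-k)) := by
        ring
    _ ≤ 2 * M * N ^ (-k) + 2 * M / η * ((k / η) ^ k * N ^ (-k)) +
          2 * M / η * exp η * (1 * N ^ (-k)) := by
        gcongr
    _ = _ := by ring

end Tail

theorem summable_and_tsum_mul_rpow_le {Q : ℕ → ℝ} {η m k M lam t : ℝ}
    {T : (ℕ → ℝ) → ℕ → ℝ} {u : ℕ → ℝ} (hQ : ∀ i, 1 ≤ i → 0 < Q i) (hη : 0 < η) (hm : 0 ≤ m)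
    (hmk : m < k) (hM : 0 < M) (hlam : 0 < lam) (ht : 0 ≤ t) (hlin : IsLinearMap ℝ T)
    (h1 : BoundedOnMassZero Q (fun i => Q i * i) M T)
    (hT : BoundedOnMassZero Q (fun i => Q i * exp (η * i)) (M * exp (-lam * t)) T)
    (hu : Summable fun i => Q i * (i : ℝ) ^ (1 + k) * |u i|)
    (hmass : ∑' i : ℕ, Q i * i * u i = 0) :
    Summable (fun i => Q i * (i : ℝ) ^ (1 + m) * |T u i|) ∧
      ∑' i, Q i * (i : ℝ) ^ (1 + m) * |T u i| ≤
        (1 + 2 ^ m / (1 - 2 ^ (m - k))) * ((2 * M + 2 * M / η * ((k / η) ^ k + exp η)) *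
          min (1 / 4) (lam / (2 * η)) ^ (-k) * ∑' i, Q i * (i : ℝ) ^ (1 + k) * |u i|) *
            (1 + t) ^ (m - k) := by
  have hk : 0 < k := hm.trans_lt hmk
  set B := (2 * M + 2 * M / η * ((k / η) ^ k + exp η)) * min (1 / 4) (lam / (2 * η)) ^ (-k) *
      ∑' i, Q i * (i : ℝ) ^ (1 + k) * |u i|
  have hB : 0 ≤ B := mul_nonneg (by positivity)
    (tsum_nonneg fun i => mul_nonneg (mul_natCast_rpow_nonneg hQ hk.le i) (abs_nonneg _))
  have htail : ∀ R : ℝ, 1 ≤ R → ∑' i : ℕ, (if R ≤ (i : ℝ) then Q i * i * |T u i| else 0) ≤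
      B * (R + t) ^ (-k) := fun R hR =>
    (tsum_tail_le_rpow hQ hη hk hM hlam ht hlin h1 hT hu hmass (by linarith)
      (by linarith)).trans_eq (by rw [mul_rpow (by positivity) (by linarith)]; ring)
  have hweight : ∀ i : ℕ, Q i * (i : ℝ) ^ (1 + m) * |T u i| = (i : ℝ) ^ m * (Q i * i * |T u i|) :=
    fun i => by rw [rpow_add' i.cast_nonneg (by linarith), rpow_one]; ring
  simp only [hweight]
  refine summable_rpow_mul_and_tsum_le_of_tail_le
    (fun i => mul_nonneg (mul_natCast_nonneg hQ i) (abs_nonneg _))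
    (h1 u (summable_mul_abs_of_summable_rpow hQ hk.le hu) hmass).1 hm hmk (by linarith)
    (le_of_eq_of_le (tsum_congr fun i => ?_) (htail 1 le_rfl))
    fun R hR => (htail R (by linarith)).trans (mul_le_mul_of_nonneg_left
      (rpow_le_rpow_of_nonpos (by linarith) (by linarith) (by linarith)) hB)
  rcases Nat.eq_zero_or_pos i with rfl | hi
  · simp
  · rw [if_pos (by exact_mod_cast hi)]

/-- Engler-type interpolation theorem: a family of linear operators which is uniformly
bounded on `X₁ = ℓ¹(Q_i i)` and exponentially decaying on `X_η = ℓ¹(Q_i e^{ηi})` maps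
`X_{1+k}` into `X_{1+m}` with polynomial decay `(1+t)^{-(k-m)}`.  All spaces carry the mass
constraint `∑ Q_i i u_i = 0`. -/
theorem engler_interpolation (Q : ℕ → ℝ) (hQ : ∀ i, 1 ≤ i → 0 < Q i)
    (η m k M lamη : ℝ) (hη : η ∈ Set.Ioo (0 : ℝ) 1) (hm : 0 < m) (hmk : m < k)
    (hM : 0 < M) (hlam : 0 < lamη)
    (S : ℝ → (ℕ → ℝ) → (ℕ → ℝ))
    (hlin : ∀ t : ℝ, 0 ≤ t → IsLinearMap ℝ (S t))
    (hX1 : ∀ t : ℝ, 0 ≤ t → ∀ u : ℕ → ℝ,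
      Summable (fun i => Q i * (i : ℝ) * |u i|) → (∑' i : ℕ, Q i * (i : ℝ) * u i) = 0 →
      Summable (fun i => Q i * (i : ℝ) * |S t u i|) ∧
        (∑' i : ℕ, Q i * (i : ℝ) * |S t u i|) ≤ M * ∑' i : ℕ, Q i * (i : ℝ) * |u i|)
    (hXeta : ∀ t : ℝ, 0 ≤ t → ∀ u : ℕ → ℝ,
      Summable (fun i => Q i * Real.exp (η * i) * |u i|) →
        (∑' i : ℕ, Q i * (i : ℝ) * u i) = 0 →
      Summable (fun i => Q i * Real.exp (η * i) * |S t u i|) ∧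
        (∑' i : ℕ, Q i * Real.exp (η * i) * |S t u i|) ≤
          M * Real.exp (-lamη * t) * ∑' i : ℕ, Q i * Real.exp (η * i) * |u i|) :
    ∃ C : ℝ, 0 < C ∧ ∀ t : ℝ, 0 ≤ t → ∀ u : ℕ → ℝ,
      Summable (fun i => Q i * (i : ℝ) ^ (1 + k) * |u i|) →
      (∑' i : ℕ, Q i * (i : ℝ) * u i) = 0 →
      Summable (fun i => Q i * (i : ℝ) ^ (1 + m) * |S t u i|) ∧
        (∑' i : ℕ, Q i * (i : ℝ) ^ (1 + m) * |S t u i|) ≤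
          C * (1 + t) ^ (-(k - m)) * ∑' i : ℕ, Q i * (i : ℝ) ^ (1 + k) * |u i| := by
  have hη0 := hη.1
  have hk : 0 < k := hm.trans hmk
  have hρ : 0 < 1 - (2 : ℝ) ^ (m - k) :=
    sub_pos.2 (rpow_lt_one_of_one_lt_of_neg one_lt_two (by linarith))
  refine ⟨(1 + 2 ^ m / (1 - 2 ^ (m - k))) * ((2 * M + 2 * M / η * ((k / η) ^ k + exp η)) *
    min (1 / 4) (lamη / (2 * η)) ^ (-k)), mul_pos (add_pos one_pos (div_pos (by positivity) hρ))
    (mul_pos (by positivity) (rpow_pos_of_pos (lt_min (by norm_num) (by positivity)) _)),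
    fun t ht u hu hmass => ?_⟩
  obtain ⟨hs, hle⟩ := summable_and_tsum_mul_rpow_le hQ hη0 hm.le hmk hM hlam ht (hlin t ht)
    (hX1 t ht) (hXeta t ht) hu hmass
  exact ⟨hs, hle.trans_eq (by rw [show -(k - m) = m - k by ring]; ring)⟩
end
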